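/- arXiv:0807.1141 — 9 statements merged into one kernel-verified Lean document; each statement's English description precedes it below -/
import Mathlib

section
/- Every countable group G that is abelian-by-finite or locally finite-by-abelian, endowed with a proper left-invariant metric, is bijectively coarsely equivalent to some countable abelian group endowed with a proper left-invariant metric. -/
/-- A group is abelian-by-finite: it has an abelian normal subgroup with finite quotient. -/
def AbelianByFinite (G : Type*) [Group G] : Prop :=
  ∃ N : Subgroup G, N.Normal ∧ (∀ a b : G, a ∈ N → b ∈ N → a * b = b * a) ∧ Finite (G ⧸ N)

/-- A group is finite-by-abelian: it has a finite normal subgroup with abelian quotient. -/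
def FiniteByAbelian (G : Type*) [Group G] : Prop :=
  ∃ N : Subgroup G, N.Normal ∧ Finite N ∧ ∀ a b : G, a * b * a⁻¹ * b⁻¹ ∈ N

/-- A group is locally finite-by-abelian: every finitely generated subgroup is
finite-by-abelian. -/
def LocallyFiniteByAbelian (G : Type*) [Group G] : Prop :=
  ∀ K : Subgroup G, Group.FG K → FiniteByAbelian K

/-!
For a left-invariant metric, right multiplication by elements of a finite set moves points by a
bounded amount. If `N` is an abelian normal subgroup of finite index and `t` picks coset
representatives, this makes `x ↦ (x * t(x)⁻¹, xN)` a coarse equivalence onto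
`N × ZMod [G : N]`.

In the locally finite-by-abelian case let `M n` be generated by the first `n` elements of an
enumeration of `G`. A finite normal subgroup `Φ n` of `M (n + 1)` with abelian quotient makes
`M (n + 1) / (Φ n * M n)` cyclic, generated by the `n`-th element, and `Φ n * M n / M n` finite.
Coding the cosets of `M n` in `M (n + 1)` by an integer modulo the cyclic order and an index of a
finite set, and iterating, maps `G` bijectively onto a direct sum of such layers. Weighting
level `n` by `n + 1` makes norm balls finite and pushes small differences into low levels. Both
coarse estimates then go level by level: for fixed `u` the commutators `⁅r, u⁆`, `r ∈ M n`, take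
finitely many values, and moving powers of the cyclic generator past an element of `M (n + 1)`
only costs an element of the finite group `Φ n`.
-/

open Function
open scoped commutatorElement DirectSum

noncomputable section

def IsBijCoarselyEquivAbelian (G : Type) [MetricSpace G] : Prop :=
  ∃ (A : Type) (_ : CommGroup A) (_ : MetricSpace A), Countable A ∧
    (∀ g x y : A, dist (g * x) (g * y) = dist x y) ∧
    (∀ (x : A) (r : ℝ), {y : A | dist x y ≤ r}.Finite) ∧
    ∃ F : G → A, Bijective F ∧
      (∀ δ : ℝ, 0 ≤ δ → ∃ ε : ℝ, 0 ≤ ε ∧ ∀ x y : G, dist x y ≤ δ → dist (F x) (F y) ≤ ε) ∧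
      (∀ δ : ℝ, 0 ≤ δ → ∃ ε : ℝ, 0 ≤ ε ∧ ∀ x y : G, dist (F x) (F y) ≤ δ → dist x y ≤ ε)

theorem isBijCoarselyEquivAbelian_of_groupNorm {G A : Type} [MetricSpace G] [Countable G]
    [CommGroup A] (w : GroupNorm A) (hw : ∀ r, {a | w a ≤ r}.Finite) (F : G → A)
    (hF : Bijective F) (hfwd : ∀ δ, ∃ ε, ∀ x y, dist x y ≤ δ → w (F x / F y) ≤ ε)
    (hbwd : ∀ δ, ∃ ε, ∀ x y, w (F x / F y) ≤ δ → dist x y ≤ ε) :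
    IsBijCoarselyEquivAbelian G := by
  let := w.toNormedCommGroup
  refine ⟨A, inferInstance, inferInstance, hF.2.countable, fun g x y => dist_mul_left g x y,
    fun x r => ?_, F, hF, fun δ _ => ?_, fun δ _ => ?_⟩
  · exact ((hw r).preimage div_right_injective.injOn).subset fun y hy =>
      (dist_eq_norm_div x y).symm.trans_le hy
  · obtain ⟨ε, h⟩ := hfwd δ
    exact ⟨max ε 0, le_max_right _ _, fun x y hxy =>
      (dist_eq_norm_div _ _).trans_le ((h x y hxy).trans (le_max_left _ _))⟩
  · obtain ⟨ε, h⟩ := hbwd δ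
    exact ⟨max ε 0, le_max_right _ _, fun x y hxy =>
      (h x y ((dist_eq_norm_div _ _).symm.trans_le hxy)).trans (le_max_left _ _)⟩

section LeftInvariantDist

variable {G : Type*} [Group G] [MetricSpace G] (hinv : ∀ g x y : G, dist (g * x) (g * y) = dist x y)
include hinv

lemma dist_one_inv_mul (x y : G) : dist 1 (x⁻¹ * y) = dist x y := by
  rw [← hinv x, mul_one, mul_inv_cancel_left]

lemma dist_self_mul (x u : G) : dist x (x * u) = dist 1 u := by
  rw [← dist_one_inv_mul hinv, inv_mul_cancel_left]

lemma dist_one_inv (x : G) : dist 1 x⁻¹ = dist 1 x := by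
  rw [← mul_one x⁻¹, dist_one_inv_mul hinv, dist_comm]

lemma dist_mul_mul_le_dist_add (x y s u : G) :
    dist (x * s) (y * u) ≤ dist x y + dist 1 s + dist 1 u := by
  linarith [dist_triangle4 (x * s) x y (y * u), dist_comm (x * s) x, dist_self_mul hinv x s,
    dist_self_mul hinv y u]

def GroupNorm.ofLeftInvariantDist : GroupNorm G where
  toFun x := dist 1 x
  map_one' := dist_self 1
  mul_le' x y := by simpa using dist_mul_mul_le_dist_add hinv 1 x 1 y
  inv' := dist_one_inv hinv
  eq_one_of_map_eq_zero' _ h := (dist_eq_zero.1 h).symm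

lemma exists_abs_dist_mul_sub_dist_le {f : G → G} (hf : (Set.range f).Finite) :
    ∃ C, ∀ x y, |dist (x * f x) (y * f y) - dist x y| ≤ C := by
  obtain ⟨B, hB⟩ := (hf.image (dist 1)).bddAbove
  have hB' : ∀ x, dist 1 (f x) ≤ B := fun x => hB ⟨f x, ⟨x, rfl⟩, rfl⟩
  refine ⟨2 * B, fun x y => abs_sub_le_iff.2 ⟨?_, ?_⟩⟩
  · linarith [dist_mul_mul_le_dist_add hinv x y (f x) (f y), hB' x, hB' y]
  · have := dist_mul_mul_le_dist_add hinv (x * f x) (y * f y) (f x)⁻¹ (f y)⁻¹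
    rw [mul_inv_cancel_right, mul_inv_cancel_right, dist_one_inv hinv, dist_one_inv hinv] at this
    linarith [hB' x, hB' y]

end LeftInvariantDist

lemma GroupNorm.ofLeftInvariantDist_div {E : Type*} [CommGroup E] [MetricSpace E]
    (hinv : ∀ g x y : E, dist (g * x) (g * y) = dist x y) (a b : E) :
    GroupNorm.ofLeftInvariantDist hinv (a / b) = dist a b := by
  rw [div_eq_inv_mul, dist_comm]
  exact dist_one_inv_mul hinv b a

def GroupNorm.prod {E F : Type*} [Group E] [Group F] (p : GroupNorm E) (q : GroupNorm F) :
    GroupNorm (E × F) where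
  toFun x := p x.1 + q x.2
  map_one' := by simp
  mul_le' x y := by
    simpa only [Prod.fst_mul, Prod.snd_mul, add_add_add_comm] using
      add_le_add (map_mul_le_add p x.1 y.1) (map_mul_le_add q x.2 y.2)
  inv' x := by simp
  eq_one_of_map_eq_zero' x h := by
    have h1 := apply_nonneg p x.1
    have h2 := apply_nonneg q x.2
    exact Prod.ext ((map_eq_zero_iff_eq_one p).1 (by linarith))
      ((map_eq_zero_iff_eq_one q).1 (by linarith))

lemma GroupNorm.prod_apply {E F : Type*} [Group E] [Group F] (p : GroupNorm E) (q : GroupNorm F)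
    (x : E × F) : p.prod q x = p x.1 + q x.2 := rfl

lemma GroupNorm.finite_prod_ball {E F : Type*} [Group E] [Group F] {p : GroupNorm E}
    {q : GroupNorm F} (hp : ∀ r, {a | p a ≤ r}.Finite) (hq : ∀ r, {b | q b ≤ r}.Finite) (r : ℝ) :
    {x | p.prod q x ≤ r}.Finite :=
  ((hp r).prod (hq r)).subset fun x (hx : p x.1 + q x.2 ≤ r) =>
    ⟨show p x.1 ≤ r by linarith [apply_nonneg q x.2],
      show q x.2 ≤ r by linarith [apply_nonneg p x.1]⟩

section AbelianByFinite

variable {G : Type} [Group G]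

lemma mul_inv_out_mem (N : Subgroup G) [N.Normal] (x : G) : x * (x : G ⧸ N).out⁻¹ ∈ N :=
  Subgroup.Normal.mem_comm inferInstance (QuotientGroup.eq.1 (QuotientGroup.out_eq' _))

def equivSubgroupProdQuotient (N : Subgroup G) [N.Normal] : G ≃ N × (G ⧸ N) where
  toFun x := (⟨x * (x : G ⧸ N).out⁻¹, mul_inv_out_mem N x⟩, x)
  invFun p := p.1 * p.2.out
  left_inv x := by simp
  right_inv := by
    rintro ⟨a, q⟩
    have hq : ((a * q.out : G) : G ⧸ N) = q := by
      rw [QuotientGroup.mk_mul, (QuotientGroup.eq_one_iff _).2 a.2, one_mul, QuotientGroup.out_eq']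
    ext <;> simp [hq]

theorem isBijCoarselyEquivAbelian_of_abelianByFinite [MetricSpace G] [Countable G]
    (hinv : ∀ g x y : G, dist (g * x) (g * y) = dist x y)
    (hprop : ∀ (x : G) (r : ℝ), {y : G | dist x y ≤ r}.Finite) (h : AbelianByFinite G) :
    IsBijCoarselyEquivAbelian G := by
  obtain ⟨N, _, hcomm, _⟩ := h
  let _ : CommGroup N := { N.toGroup with mul_comm := fun a b => Subtype.ext (hcomm a b a.2 b.2) }
  have : NeZero (Nat.card (G ⧸ N)) := ⟨Nat.card_pos.ne'⟩
  let ι : G ⧸ N ≃ Multiplicative (ZMod (Nat.card (G ⧸ N))) :=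
    (Finite.equivFin _).trans ((ZMod.finEquiv _).toEquiv.trans Multiplicative.ofAdd)
  let e := (equivSubgroupProdQuotient N).trans ((Equiv.refl N).prodCongr ι)
  let w := (GroupNorm.ofLeftInvariantDist fun (g x y : N) => hinv g x y).prod
    (1 : GroupNorm (Multiplicative (ZMod (Nat.card (G ⧸ N)))))
  obtain ⟨C, hC⟩ := exists_abs_dist_mul_sub_dist_le hinv (f := fun x => (x : G ⧸ N).out⁻¹)
    ((Set.finite_range fun q : G ⧸ N => q.out⁻¹).subset <| by rintro _ ⟨x, rfl⟩; exact ⟨_, rfl⟩)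
  have hw : ∀ x y : G, dist (x * (x : G ⧸ N).out⁻¹) (y * (y : G ⧸ N).out⁻¹) ≤ w (e x / e y) ∧
      w (e x / e y) ≤ dist (x * (x : G ⧸ N).out⁻¹) (y * (y : G ⧸ N).out⁻¹) + 1 := fun x y => by
    rw [GroupNorm.prod_apply, Prod.fst_div, GroupNorm.ofLeftInvariantDist_div, GroupNorm.apply_one]
    constructor <;> split_ifs <;> simp [Subtype.dist_eq, e, equivSubgroupProdQuotient]
  refine isBijCoarselyEquivAbelian_of_groupNorm w (GroupNorm.finite_prod_ball
    (fun r => (hprop 1 r).preimage Subtype.val_injective.injOn) fun r => Set.toFinite _)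
    e e.bijective (fun δ => ⟨δ + C + 1, fun x y hxy => ?_⟩) (fun δ => ⟨δ + C, fun x y hxy => ?_⟩)
  · linarith [(hw x y).2, (abs_le.1 (hC x y)).2]
  · linarith [(hw x y).1, (abs_le.1 (hC x y)).1]

end AbelianByFinite

lemma ZMod.valMinAbs_intCast_add_of_eq_zero {m : ℕ} (hm : m = 0) (k : ℤ) (a : ZMod m) :
    ((k : ZMod m) + a).valMinAbs = k + a.valMinAbs := by
  subst hm
  rfl

section WeightedNorm

-- The `valMinAbs` term keeps balls finite when `p = 0`, where `ZMod p = ℤ`.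
def pairNorm {p q : ℕ} (v : ZMod p × ZMod q) : ℕ :=
  v.1.valMinAbs.natAbs + if v.2 = 0 then 0 else 1

variable {p q : ℕ}

lemma pairNorm_eq_zero {v : ZMod p × ZMod q} : pairNorm v = 0 ↔ v = 0 := by
  simp [pairNorm, Prod.ext_iff, ZMod.valMinAbs_eq_zero]

lemma pairNorm_zero : pairNorm (0 : ZMod p × ZMod q) = 0 := pairNorm_eq_zero.2 rfl

lemma pairNorm_neg (v : ZMod p × ZMod q) : pairNorm (-v) = pairNorm v := by
  simp [pairNorm, ZMod.natAbs_valMinAbs_neg]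

lemma pairNorm_add_le (v w : ZMod p × ZMod q) : pairNorm (v + w) ≤ pairNorm v + pairNorm w := by
  have h1 := ZMod.natAbs_valMinAbs_add_le v.1 w.1
  have h2 := Int.natAbs_add_le v.1.valMinAbs w.1.valMinAbs
  simp only [pairNorm, Prod.fst_add, Prod.snd_add]
  split_ifs <;> simp_all <;> omega

lemma pairNorm_le_natAbs_valMinAbs_add_one (v : ZMod p × ZMod q) :
    pairNorm v ≤ v.1.valMinAbs.natAbs + 1 := by
  unfold pairNorm
  split_ifs <;> omega

lemma finite_setOf_pairNorm_le [NeZero q] (r : ℕ) : {v : ZMod p × ZMod q | pairNorm v ≤ r}.Finite :=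
  (((Set.finite_Icc (-r : ℤ) r).preimage ZMod.injective_valMinAbs.injOn).prod
    Set.finite_univ).subset fun v (hv : pairNorm v ≤ r) => by
      have : v.1.valMinAbs.natAbs ≤ r := le_trans (Nat.le_add_right _ _) hv
      exact ⟨⟨by omega, by omega⟩, trivial⟩

variable {a b : ℕ → ℕ}

def weightedNorm (v : ⨁ k, ZMod (a k) × ZMod (b k)) : ℕ := ∑ k ∈ v.support, (k + 1) * pairNorm (v k)

lemma weightedNorm_eq_sum {v : ⨁ k, ZMod (a k) × ZMod (b k)} {s : Finset ℕ} (h : v.support ⊆ s) :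
    weightedNorm v = ∑ k ∈ s, (k + 1) * pairNorm (v k) :=
  Finset.sum_subset h fun k _ hk => by simp [DFinsupp.notMem_support_iff.1 hk, pairNorm_zero]

lemma weightedNorm_zero : weightedNorm (0 : ⨁ k, ZMod (a k) × ZMod (b k)) = 0 := by
  simp [weightedNorm]

lemma weightedNorm_neg (v : ⨁ k, ZMod (a k) × ZMod (b k)) : weightedNorm (-v) = weightedNorm v := by
  have h (k : ℕ) : (-v) k = -v k := rfl
  have : (-v).support = v.support := by ext k; simp [h]
  simp only [weightedNorm, this, h, pairNorm_neg]

lemma weightedNorm_add_le (v w : ⨁ k, ZMod (a k) × ZMod (b k)) :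
    weightedNorm (v + w) ≤ weightedNorm v + weightedNorm w := by
  classical
  rw [weightedNorm_eq_sum DFinsupp.support_add, weightedNorm_eq_sum Finset.subset_union_left,
    weightedNorm_eq_sum Finset.subset_union_right, ← Finset.sum_add_distrib]
  refine Finset.sum_le_sum fun k _ => ?_
  rw [DFinsupp.add_apply, ← mul_add]
  exact Nat.mul_le_mul_left _ (pairNorm_add_le _ _)

lemma weightedNorm_sub_comm (v w : ⨁ k, ZMod (a k) × ZMod (b k)) :
    weightedNorm (v - w) = weightedNorm (w - v) := by
  rw [← neg_sub, weightedNorm_neg]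

lemma weightedNorm_sub_le (u v w : ⨁ k, ZMod (a k) × ZMod (b k)) :
    weightedNorm (u - w) ≤ weightedNorm (u - v) + weightedNorm (v - w) := by
  simpa using weightedNorm_add_le (u - v) (v - w)

lemma mul_pairNorm_le_weightedNorm (v : ⨁ k, ZMod (a k) × ZMod (b k)) (k : ℕ) :
    (k + 1) * pairNorm (v k) ≤ weightedNorm v := by
  by_cases hk : k ∈ v.support
  · exact Finset.single_le_sum (f := fun k => (k + 1) * pairNorm (v k))
      (fun _ _ => Nat.zero_le _) hk
  · simp [DFinsupp.notMem_support_iff.1 hk, pairNorm_zero]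

lemma weightedNorm_eq_zero {v : ⨁ k, ZMod (a k) × ZMod (b k)} : weightedNorm v = 0 ↔ v = 0 := by
  refine ⟨fun h => DFinsupp.ext fun k => pairNorm_eq_zero.1 ?_, fun h => h ▸ weightedNorm_zero⟩
  have := mul_pairNorm_le_weightedNorm v k
  rw [h, Nat.le_zero, mul_eq_zero] at this
  omega

lemma apply_eq_zero_of_weightedNorm_le {v : ⨁ k, ZMod (a k) × ZMod (b k)} {r k : ℕ}
    (h : weightedNorm v ≤ r) (hk : r ≤ k) : v k = 0 := by
  have := mul_pairNorm_le_weightedNorm v k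
  rw [← pairNorm_eq_zero]
  by_contra hne
  have : k + 1 ≤ (k + 1) * pairNorm (v k) := Nat.le_mul_of_pos_right _ (Nat.pos_of_ne_zero hne)
  omega

lemma weightedNorm_of_add {n : ℕ} (u : ZMod (a n) × ZMod (b n))
    {v : ⨁ k, ZMod (a k) × ZMod (b k)} (hv : ∀ k, n ≤ k → v k = 0) :
    weightedNorm (DirectSum.of _ n u + v) = (n + 1) * pairNorm u + weightedNorm v := by
  classical
  have hn : n ∉ v.support := DFinsupp.notMem_support_iff.2 (hv n le_rfl)
  have hsupp : (DirectSum.of _ n u + v).support ⊆ insert n v.support := by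
    intro k hk
    rw [Finset.mem_insert, DFinsupp.mem_support_iff]
    by_contra! hk'
    rw [DFinsupp.mem_support_iff, DFinsupp.add_apply, DirectSum.of_eq_of_ne _ _ _ hk'.1,
      hk'.2, add_zero] at hk
    exact hk rfl
  rw [weightedNorm_eq_sum hsupp, Finset.sum_insert hn, weightedNorm]
  congr 1
  · simp [hv n le_rfl]
  · refine Finset.sum_congr rfl fun k hk => ?_
    rw [DFinsupp.add_apply, DirectSum.of_eq_of_ne _ _ _ (by rintro rfl; exact hn hk), zero_add]

lemma finite_setOf_weightedNorm_le [∀ k, NeZero (b k)] (r : ℕ) :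
    {v : ⨁ k, ZMod (a k) × ZMod (b k) | weightedNorm v ≤ r}.Finite := by
  classical
  refine ((Finset.range r).dfinsupp fun k =>
    (finite_setOf_pairNorm_le r).toFinset).finite_toSet.subset fun v (hv : weightedNorm v ≤ r) =>
      Finset.mem_dfinsupp_iff.2 ⟨fun k hk => ?_, fun k _ => ?_⟩
  · by_contra hkr
    exact DFinsupp.mem_support_iff.1 hk (apply_eq_zero_of_weightedNorm_le hv (by simpa using hkr))
  · rw [Set.Finite.mem_toFinset]
    show pairNorm (v k) ≤ r
    have := mul_pairNorm_le_weightedNorm v k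
    nlinarith

def weightedGroupNorm : GroupNorm (Multiplicative (⨁ k, ZMod (a k) × ZMod (b k))) where
  toFun v := weightedNorm v.toAdd
  map_one' := by simp [weightedNorm_zero]
  mul_le' v w := by exact_mod_cast weightedNorm_add_le v.toAdd w.toAdd
  inv' v := by exact_mod_cast weightedNorm_neg v.toAdd
  eq_one_of_map_eq_zero' v h := weightedNorm_eq_zero.1 (by exact_mod_cast h)

end WeightedNorm

section CosetRep

variable {G : Type*} [Group G] (H : Subgroup G)

open Classical in
def cosetRep (x : G) : G := if x ∈ H then 1 else (x : G ⧸ H).out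

lemma inv_mul_cosetRep_mem (x : G) : x⁻¹ * cosetRep H x ∈ H := by
  unfold cosetRep
  split_ifs with h
  · simpa using inv_mem h
  · exact QuotientGroup.eq.1 (QuotientGroup.out_eq' _).symm

lemma cosetRep_eq_of_inv_mul_mem {x y : G} (h : x⁻¹ * y ∈ H) : cosetRep H x = cosetRep H y := by
  have hxy : (x : G ⧸ H) = y := QuotientGroup.eq.2 h
  have hmem : x ∈ H ↔ y ∈ H := by
    rw [← mul_inv_cancel_left x y, H.mul_mem_cancel_right h]
  unfold cosetRep
  by_cases hx : x ∈ H
  · rw [if_pos hx, if_pos (hmem.1 hx)]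
  · rw [if_neg hx, if_neg (mt hmem.2 hx), hxy]

lemma cosetRep_of_mem {x : G} (h : x ∈ H) : cosetRep H x = 1 := by
  simp [cosetRep, h]

lemma cosetRep_mul_of_mem (x : G) {u : G} (hu : u ∈ H) : cosetRep H (x * u) = cosetRep H x :=
  (cosetRep_eq_of_inv_mul_mem H (by simpa using hu)).symm

lemma cosetRep_cosetRep (x : G) : cosetRep H (cosetRep H x) = cosetRep H x :=
  (cosetRep_eq_of_inv_mul_mem H (inv_mul_cosetRep_mem H x)).symm

end CosetRep

lemma LocallyFiniteByAbelian.exists_finite_of_fg {G : Type*} [Group G]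
    (h : LocallyFiniteByAbelian G) {K : Subgroup G} (hK : K.FG) :
    ∃ Φ : Subgroup G, (Φ : Set G).Finite ∧ Φ ≤ K ∧
      (∀ x ∈ K, ∀ φ ∈ Φ, x * φ * x⁻¹ ∈ Φ) ∧ ∀ a ∈ K, ∀ b ∈ K, ⁅a, b⁆ ∈ Φ := by
  obtain ⟨N, hN, hNfin, hNcomm⟩ := h K ((Group.fg_iff_subgroup_fg K).2 hK)
  refine ⟨N.map K.subtype, by rw [Subgroup.coe_map]; exact (Set.toFinite _).image _,
    Subgroup.map_subtype_le N, ?_, fun a ha b hb => ⟨_, hNcomm ⟨a, ha⟩ ⟨b, hb⟩, rfl⟩⟩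
  rintro x hx _ ⟨φ, hφ, rfl⟩
  exact ⟨_, hN.conj_mem φ hφ ⟨x, hx⟩, rfl⟩

structure FinByAbFiltration (G : Type) [Group G] where
  gen : ℕ → G
  M : ℕ → Subgroup G
  Φ : ℕ → Subgroup G
  M_zero : M 0 = ⊥
  M_succ : ∀ n, M (n + 1) = M n ⊔ Subgroup.zpowers (gen n)
  exists_mem_M : ∀ x, ∃ n, x ∈ M n
  finite_Φ : ∀ n, (Φ n : Set G).Finite
  Φ_le : ∀ n, Φ n ≤ M (n + 1)
  conj_mem_Φ : ∀ n, ∀ x ∈ M (n + 1), ∀ φ ∈ Φ n, x * φ * x⁻¹ ∈ Φ n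
  commutator_mem_Φ : ∀ n, ∀ a ∈ M (n + 1), ∀ b ∈ M (n + 1), ⁅a, b⁆ ∈ Φ n
  finite_commutators : ∀ n (u : G), ((fun r : G => ⁅r, u⁆) '' (M n : Set G)).Finite

namespace FinByAbFiltration

variable {G : Type} [Group G]

theorem nonempty_of_locallyFiniteByAbelian [Countable G] (h : LocallyFiniteByAbelian G) :
    Nonempty (FinByAbFiltration G) := by
  classical
  obtain ⟨e, he⟩ := exists_surjective_nat G
  let S : ℕ → Finset G := fun n => (Finset.range n).image e
  have hS : ∀ n, S (n + 1) = insert (e n) (S n) := fun n => by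
    simp only [S, Finset.range_add_one, Finset.image_insert]
  have hfg : ∀ n u, (Subgroup.closure (insert u (S n : Set G))).FG := fun n u =>
    ⟨insert u (S n), by rw [Finset.coe_insert]⟩
  choose Φ hfin hle hconj hcomm using fun n =>
    h.exists_finite_of_fg (K := Subgroup.closure (S (n + 1) : Set G)) ⟨_, rfl⟩
  refine ⟨⟨e, fun n => Subgroup.closure (S n), Φ, by simp [S], fun n => ?_,
    fun x => ?_, hfin, hle, hconj, hcomm, fun n u => ?_⟩⟩
  · rw [hS, Finset.coe_insert, Set.insert_eq, Subgroup.closure_union, sup_comm,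
      Subgroup.zpowers_eq_closure]
  · obtain ⟨n, rfl⟩ := he x
    exact ⟨n + 1, Subgroup.subset_closure
      (Finset.mem_coe.2 (Finset.mem_image_of_mem e (Finset.self_mem_range_succ n)))⟩
  · obtain ⟨Ψ, hΨfin, -, -, hΨ⟩ := h.exists_finite_of_fg (hfg n u)
    exact hΨfin.subset <| Set.image_subset_iff.2 fun r hr =>
      hΨ r (Subgroup.closure_mono (Set.subset_insert _ _) hr) u
        (Subgroup.subset_closure (Set.mem_insert _ _))

variable (c : FinByAbFiltration G) (n : ℕ)

lemma M_le_succ : c.M n ≤ c.M (n + 1) := c.M_succ n ▸ le_sup_left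

lemma M_mono : Monotone c.M := monotone_nat_of_le_succ c.M_le_succ

lemma zpow_gen_mem (k : ℤ) : c.gen n ^ k ∈ c.M (n + 1) :=
  c.M_succ n ▸ Subgroup.mem_sup_right (Subgroup.zpow_mem_zpowers _ k)

def ΦM : Subgroup G where
  carrier := {x | ∃ φ ∈ c.Φ n, ∃ m ∈ c.M n, φ * m = x}
  one_mem' := ⟨1, one_mem _, 1, one_mem _, mul_one 1⟩
  mul_mem' := by
    rintro _ _ ⟨φ, hφ, m, hm, rfl⟩ ⟨ψ, hψ, m', hm', rfl⟩
    exact ⟨φ * (m * ψ * m⁻¹), mul_mem hφ (c.conj_mem_Φ n m (c.M_le_succ n hm) ψ hψ), m * m',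
      mul_mem hm hm', by group⟩
  inv_mem' := by
    rintro _ ⟨φ, hφ, m, hm, rfl⟩
    exact ⟨m⁻¹ * φ⁻¹ * m⁻¹⁻¹, c.conj_mem_Φ n _ (inv_mem (c.M_le_succ n hm)) _ (inv_mem hφ),
      m⁻¹, inv_mem hm, by group⟩

lemma M_le_ΦM : c.M n ≤ c.ΦM n := fun m hm => ⟨1, one_mem _, m, hm, one_mul m⟩

lemma Φ_le_ΦM : c.Φ n ≤ c.ΦM n := fun φ hφ => ⟨φ, hφ, 1, one_mem _, mul_one φ⟩

lemma ΦM_le : c.ΦM n ≤ c.M (n + 1) := by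
  rintro _ ⟨φ, hφ, m, hm, rfl⟩
  exact mul_mem (c.Φ_le n hφ) (c.M_le_succ n hm)

lemma conj_mem_ΦM {x p : G} (hx : x ∈ c.M (n + 1)) (hp : p ∈ c.ΦM n) : x * p * x⁻¹ ∈ c.ΦM n := by
  obtain ⟨φ, hφ, m, hm, rfl⟩ := hp
  rw [show x * (φ * m) * x⁻¹ = (x * φ * x⁻¹) * ⁅x, m⁆ * m by group]
  exact mul_mem (mul_mem (c.Φ_le_ΦM n (c.conj_mem_Φ n x hx φ hφ))
    (c.Φ_le_ΦM n (c.commutator_mem_Φ n x hx m (c.M_le_succ n hm)))) (c.M_le_ΦM n hm)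

lemma zpow_add_inv_mul_mul_mem_ΦM {x y : G} {k l : ℤ} (hx : (c.gen n ^ k)⁻¹ * x ∈ c.ΦM n)
    (hy : (c.gen n ^ l)⁻¹ * y ∈ c.ΦM n) : (c.gen n ^ (k + l))⁻¹ * (x * y) ∈ c.ΦM n := by
  rw [show (c.gen n ^ (k + l))⁻¹ * (x * y) =
    (c.gen n ^ l)⁻¹ * ((c.gen n ^ k)⁻¹ * x) * (c.gen n ^ l)⁻¹⁻¹ * ((c.gen n ^ l)⁻¹ * y) by
      rw [zpow_add]; group]
  exact mul_mem (c.conj_mem_ΦM n (inv_mem (c.zpow_gen_mem n l)) hx) hy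

lemma exists_zpow_inv_mul_mem_ΦM {x : G} (hx : x ∈ c.M (n + 1)) :
    ∃ k : ℤ, (c.gen n ^ k)⁻¹ * x ∈ c.ΦM n := by
  rw [c.M_succ, Subgroup.sup_eq_closure] at hx
  induction hx using Subgroup.closure_induction with
  | mem x hx =>
    rcases hx with hx | ⟨k, rfl⟩
    · exact ⟨0, by simpa using c.M_le_ΦM n hx⟩
    · exact ⟨k, by simp⟩
  | one => exact ⟨0, by simp⟩
  | mul x y _ _ hx hy =>
    obtain ⟨k, hk⟩ := hx
    obtain ⟨l, hl⟩ := hy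
    exact ⟨k + l, c.zpow_add_inv_mul_mul_mem_ΦM n hk hl⟩
  | inv x _ hx =>
    obtain ⟨k, hk⟩ := hx
    refine ⟨-k, ?_⟩
    rw [show (c.gen n ^ (-k))⁻¹ * x⁻¹ = c.gen n ^ k * ((c.gen n ^ k)⁻¹ * x)⁻¹ * (c.gen n ^ k)⁻¹ by
      group]
    exact c.conj_mem_ΦM n (c.zpow_gen_mem n k) (inv_mem hk)

-- The order of `gen n` modulo `ΦM n`, `0` if it is infinite.
def cycOrder : ℕ :=
  (Int.subgroup_cyclic ((c.ΦM n).toAddSubgroup.comap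
    (zmultiplesHom (Additive G) (Additive.ofMul (c.gen n))))).choose.natAbs

lemma zpow_gen_mem_ΦM_iff (k : ℤ) : c.gen n ^ k ∈ c.ΦM n ↔ (k : ZMod (c.cycOrder n)) = 0 := by
  have h := (Int.subgroup_cyclic ((c.ΦM n).toAddSubgroup.comap
    (zmultiplesHom (Additive G) (Additive.ofMul (c.gen n))))).choose_spec
  rw [← AddSubgroup.zmultiples_eq_closure, ← Int.zmultiples_natAbs] at h
  rw [ZMod.intCast_zmod_eq_zero_iff_dvd, cycOrder, ← Int.mem_zmultiples_iff, ← h]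
  rfl

-- The class of `x` in the cyclic quotient `M (n + 1) / ΦM n`.
open Classical in
def expMod (x : G) : ZMod (c.cycOrder n) :=
  if hx : x ∈ c.M (n + 1) then (c.exists_zpow_inv_mul_mem_ΦM n hx).choose else 0

lemma zpow_inv_mul_mem_ΦM_iff {x : G} (hx : x ∈ c.M (n + 1)) (k : ℤ) :
    (c.gen n ^ k)⁻¹ * x ∈ c.ΦM n ↔ (k : ZMod (c.cycOrder n)) = c.expMod n x := by
  obtain ⟨k₀, hk₀⟩ : ∃ k₀ : ℤ, (c.gen n ^ k₀)⁻¹ * x ∈ c.ΦM n ∧ c.expMod n x = k₀ :=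
    ⟨_, (c.exists_zpow_inv_mul_mem_ΦM n hx).choose_spec, dif_pos hx⟩
  rw [hk₀.2, ← sub_eq_zero, ← Int.cast_sub, ← c.zpow_gen_mem_ΦM_iff,
    show c.gen n ^ (k - k₀) = (c.gen n ^ k₀)⁻¹ * x * ((c.gen n ^ k)⁻¹ * x)⁻¹ by
      rw [zpow_sub]; group]
  exact ⟨fun h => mul_mem hk₀.1 (inv_mem h), fun h => by simpa using mul_mem (inv_mem h) hk₀.1⟩

lemma expMod_mul {x y : G} (hx : x ∈ c.M (n + 1)) (hy : y ∈ c.M (n + 1)) :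
    c.expMod n (x * y) = c.expMod n x + c.expMod n y := by
  obtain ⟨k, hk⟩ := c.exists_zpow_inv_mul_mem_ΦM n hx
  obtain ⟨l, hl⟩ := c.exists_zpow_inv_mul_mem_ΦM n hy
  rw [← (c.zpow_inv_mul_mem_ΦM_iff n hx k).1 hk, ← (c.zpow_inv_mul_mem_ΦM_iff n hy l).1 hl,
    ← Int.cast_add, eq_comm, ← c.zpow_inv_mul_mem_ΦM_iff n (mul_mem hx hy)]
  exact c.zpow_add_inv_mul_mul_mem_ΦM n hk hl

open Classical in
def cosetReps : Finset G := (c.finite_Φ n).toFinset.image (cosetRep (c.M n))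

lemma cosetRep_mem_cosetReps {p : G} (hp : p ∈ c.ΦM n) : cosetRep (c.M n) p ∈ c.cosetReps n := by
  classical
  obtain ⟨φ, hφ, m, hm, rfl⟩ := hp
  rw [cosetRep_mul_of_mem _ _ hm]
  exact Finset.mem_image_of_mem _ ((c.finite_Φ n).mem_toFinset.2 hφ)

lemma one_mem_cosetReps : (1 : G) ∈ c.cosetReps n := by
  simpa [cosetRep_of_mem] using c.cosetRep_mem_cosetReps n (one_mem _)

lemma exists_eq_cosetRep_of_mem_cosetReps {t : G} (ht : t ∈ c.cosetReps n) :
    ∃ φ ∈ c.Φ n, cosetRep (c.M n) φ = t := by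
  simpa [cosetReps] using ht

lemma mem_ΦM_of_mem_cosetReps {t : G} (ht : t ∈ c.cosetReps n) : t ∈ c.ΦM n := by
  obtain ⟨φ, hφ, rfl⟩ := c.exists_eq_cosetRep_of_mem_cosetReps n ht
  exact ⟨φ, hφ, _, inv_mul_cosetRep_mem _ φ, mul_inv_cancel_left φ _⟩

lemma cosetRep_of_mem_cosetReps {t : G} (ht : t ∈ c.cosetReps n) : cosetRep (c.M n) t = t := by
  obtain ⟨φ, -, rfl⟩ := c.exists_eq_cosetRep_of_mem_cosetReps n ht
  exact cosetRep_cosetRep _ φ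

instance : NeZero (c.cosetReps n).card := ⟨Finset.card_ne_zero_of_mem (c.one_mem_cosetReps n)⟩

def cosetRepsEquiv : c.cosetReps n ≃ ZMod (c.cosetReps n).card :=
  let ι := (c.cosetReps n).equivFin.trans (ZMod.finEquiv _).toEquiv
  ι.trans (Equiv.subRight (ι ⟨1, c.one_mem_cosetReps n⟩))

lemma cosetRepsEquiv_one : c.cosetRepsEquiv n ⟨1, c.one_mem_cosetReps n⟩ = 0 := sub_self _

abbrev Layer : Type := ZMod (c.cycOrder n) × ZMod (c.cosetReps n).card

-- A transversal of `M n` in `M (n + 1)` indexed by the layer; `code` and `down` below invert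
-- `(v, m) ↦ sect n v * m`.
def sect (v : c.Layer n) : G := c.gen n ^ v.1.valMinAbs * ((c.cosetRepsEquiv n).symm v.2 : G)

lemma sect_mem (v : c.Layer n) : c.sect n v ∈ c.M (n + 1) :=
  mul_mem (c.zpow_gen_mem n _)
    (c.ΦM_le n (c.mem_ΦM_of_mem_cosetReps n ((c.cosetRepsEquiv n).symm v.2).2))

lemma sect_zero : c.sect n 0 = 1 := by
  rw [sect, Prod.fst_zero, Prod.snd_zero, ZMod.valMinAbs_zero, zpow_zero, one_mul,
    ← c.cosetRepsEquiv_one n, Equiv.symm_apply_apply]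

def ΦMPart (x : G) : G := (c.gen n ^ (c.expMod n x).valMinAbs)⁻¹ * x

lemma ΦMPart_mem {x : G} (hx : x ∈ c.M (n + 1)) : c.ΦMPart n x ∈ c.ΦM n :=
  (c.zpow_inv_mul_mem_ΦM_iff n hx _).2 (ZMod.coe_valMinAbs _)

open Classical in
def code (x : G) : c.Layer n :=
  (c.expMod n x,
    if h : cosetRep (c.M n) (c.ΦMPart n x) ∈ c.cosetReps n then c.cosetRepsEquiv n ⟨_, h⟩ else 0)

def down (x : G) : G := (cosetRep (c.M n) (c.ΦMPart n x))⁻¹ * c.ΦMPart n x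

lemma down_mem (x : G) : c.down n x ∈ c.M n := by
  simpa [down] using inv_mem (inv_mul_cosetRep_mem (c.M n) (c.ΦMPart n x))

lemma sect_code_mul_down {x : G} (hx : x ∈ c.M (n + 1)) :
    c.sect n (c.code n x) * c.down n x = x := by
  have hT := c.cosetRep_mem_cosetReps n (c.ΦMPart_mem n hx)
  have ht : ((c.cosetRepsEquiv n).symm (c.code n x).2 : G) = cosetRep (c.M n) (c.ΦMPart n x) := by
    simp only [code, dif_pos hT, Equiv.symm_apply_apply]
  rw [sect, ht, down, mul_assoc, mul_inv_cancel_left, ΦMPart]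
  exact mul_inv_cancel_left _ _

lemma code_sect_mul_and_down_sect_mul (v : c.Layer n) {m : G} (hm : m ∈ c.M n) :
    c.code n (c.sect n v * m) = v ∧ c.down n (c.sect n v * m) = m := by
  set t : c.cosetReps n := (c.cosetRepsEquiv n).symm v.2
  have hx : c.sect n v * m ∈ c.M (n + 1) := mul_mem (c.sect_mem n v) (c.M_le_succ n hm)
  have hexp : c.expMod n (c.sect n v * m) = v.1 := by
    rw [← (c.zpow_inv_mul_mem_ΦM_iff n hx _).1 ?_, ZMod.coe_valMinAbs]
    rw [sect, mul_assoc, inv_mul_cancel_left]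
    exact mul_mem (c.mem_ΦM_of_mem_cosetReps n t.2) (c.M_le_ΦM n hm)
  have hpp : c.ΦMPart n (c.sect n v * m) = t * m := by
    rw [ΦMPart, hexp, sect, mul_assoc, inv_mul_cancel_left]
  have hrep : cosetRep (c.M n) (c.ΦMPart n (c.sect n v * m)) = t := by
    rw [hpp, cosetRep_mul_of_mem _ _ hm, c.cosetRep_of_mem_cosetReps n t.2]
  refine ⟨Prod.ext hexp ?_, ?_⟩
  · simp only [code, hrep, t.2, dif_pos, Subtype.coe_eta, Equiv.apply_symm_apply, t]
  · rw [down, hrep, hpp, inv_mul_cancel_left]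

lemma code_and_down_of_mem {x : G} (hx : x ∈ c.M n) : c.code n x = 0 ∧ c.down n x = x := by
  simpa [c.sect_zero n] using c.code_sect_mul_and_down_sect_mul n 0 hx

lemma code_and_down_mul_of_mem {x u : G} (hx : x ∈ c.M (n + 1)) (hu : u ∈ c.M n) :
    c.code n (x * u) = c.code n x ∧ c.down n (x * u) = c.down n x * u := by
  have := c.code_sect_mul_and_down_sect_mul n (c.code n x) (mul_mem (c.down_mem n x) hu)
  rwa [← mul_assoc, c.sect_code_mul_down n hx] at this

lemma inv_mul_eq_of_code_eq {x y : G} (hx : x ∈ c.M (n + 1)) (hy : y ∈ c.M (n + 1))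
    (h : c.code n x = c.code n y) : x⁻¹ * y = (c.down n x)⁻¹ * c.down n y := by
  conv_lhs => rw [← c.sect_code_mul_down n hx, ← c.sect_code_mul_down n hy, h]
  group

lemma down_mul_mul_inv_down {w x : G} (hw : w ∈ c.M (n + 1)) (hx : x ∈ c.M (n + 1)) :
    c.down n (w * x) * (c.down n x)⁻¹ = c.down n (w * c.sect n (c.code n x)) := by
  have h := (c.code_and_down_mul_of_mem n (mul_mem hw (c.sect_mem n (c.code n x)))
    (c.down_mem n x)).2
  rw [mul_assoc, c.sect_code_mul_down n hx] at h
  rw [h, mul_inv_cancel_right]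

lemma down_zpow_mul (hcyc : c.cycOrder n = 0) {y : G} (hy : y ∈ c.M (n + 1)) (k : ℤ) :
    c.down n (c.gen n ^ k * y) = c.down n y := by
  have hsect : c.gen n ^ k * c.sect n (c.code n y) =
      c.sect n ((k : ZMod _) + (c.code n y).1, (c.code n y).2) := by
    rw [sect, sect, ZMod.valMinAbs_intCast_add_of_eq_zero hcyc, zpow_add, mul_assoc]
  have h := (c.code_sect_mul_and_down_sect_mul n
    ((k : ZMod _) + (c.code n y).1, (c.code n y).2) (c.down_mem n y)).2
  rwa [← hsect, mul_assoc, c.sect_code_mul_down n hy] at h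

lemma finite_range_down_mul_sect {w : G} (hw : w ∈ c.M (n + 1)) :
    (Set.range fun v => c.down n (w * c.sect n v)).Finite := by
  by_cases hcyc : c.cycOrder n = 0
  · refine (((c.finite_Φ n).prod (c.cosetReps n).finite_toSet).image
      fun p => c.down n (p.1 * w * p.2)).subset ?_
    -- `w * gen n ^ j * t = gen n ^ j * (⁅gen n ^ (-j), w⁆ * w * t)`, and `down` ignores the
    -- leading power of `gen n` when the layer is infinite cyclic.
    rintro _ ⟨v, rfl⟩
    set j := v.1.valMinAbs
    set t := ((c.cosetRepsEquiv n).symm v.2 : G)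
    have hφ : ⁅c.gen n ^ (-j), w⁆ ∈ c.Φ n :=
      c.commutator_mem_Φ n _ (c.zpow_gen_mem n _) w hw
    have ht : t ∈ c.cosetReps n := ((c.cosetRepsEquiv n).symm v.2).2
    refine ⟨(⁅c.gen n ^ (-j), w⁆, t), ⟨hφ, ht⟩, ?_⟩
    have hmem : ⁅c.gen n ^ (-j), w⁆ * w * t ∈ c.M (n + 1) :=
      mul_mem (mul_mem (c.Φ_le n hφ) hw) (c.ΦM_le n (c.mem_ΦM_of_mem_cosetReps n ht))
    show c.down n _ = c.down n (w * c.sect n v)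
    rw [← c.down_zpow_mul n hcyc hmem j, sect]
    congr 1
    simp only [commutatorElement_def, j, t]
    group
  · have : NeZero (c.cycOrder n) := ⟨hcyc⟩
    exact Set.finite_range _

abbrev Digits : Type := ⨁ k, c.Layer k

def expand : ℕ → G → c.Digits
  | 0, _ => 0
  | n + 1, x => DirectSum.of c.Layer n (c.code n x) + expand n (c.down n x)

lemma expand_succ (x : G) :
    c.expand (n + 1) x = DirectSum.of c.Layer n (c.code n x) + c.expand n (c.down n x) := rfl

lemma expand_apply_of_le {k : ℕ} (hk : n ≤ k) (x : G) : c.expand n x k = 0 := by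
  induction n generalizing x with
  | zero => rfl
  | succ n ih =>
    rw [expand_succ, DirectSum.add_apply, DirectSum.of_eq_of_ne _ _ _ (by omega), ih (by omega),
      add_zero]

lemma expand_succ_apply_self (x : G) : c.expand (n + 1) x n = c.code n x := by
  rw [expand_succ, DirectSum.add_apply, DirectSum.of_eq_same, c.expand_apply_of_le n le_rfl,
    add_zero]

lemma expand_succ_apply_of_ne {k : ℕ} (hk : k ≠ n) (x : G) :
    c.expand (n + 1) x k = c.expand n (c.down n x) k := by
  rw [expand_succ, DirectSum.add_apply, DirectSum.of_eq_of_ne _ _ _ hk, zero_add]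

lemma expand_succ_of_mem {x : G} (hx : x ∈ c.M n) : c.expand (n + 1) x = c.expand n x := by
  obtain ⟨hcode, hdown⟩ := c.code_and_down_of_mem n hx
  rw [expand_succ, hcode, hdown, map_zero, zero_add]

lemma expand_eq_of_le {m : ℕ} (h : m ≤ n) {x : G} (hx : x ∈ c.M m) :
    c.expand n x = c.expand m x := by
  induction n, h using Nat.le_induction with
  | base => rfl
  | succ n hmn ih => rw [c.expand_succ_of_mem n (c.M_mono hmn hx), ih]

lemma weightedNorm_expand_succ_sub (x y : G) :
    weightedNorm (c.expand (n + 1) y - c.expand (n + 1) x) =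
      (n + 1) * pairNorm (c.code n y - c.code n x) +
        weightedNorm (c.expand n (c.down n y) - c.expand n (c.down n x)) := by
  rw [expand_succ, expand_succ, show ∀ a b d e : c.Digits, a + b - (d + e) = a - d + (b - e) by
    intros; abel, ← map_sub]
  exact weightedNorm_of_add _ fun k hk => by
    rw [DirectSum.sub_apply, c.expand_apply_of_le n hk, c.expand_apply_of_le n hk, sub_zero]

lemma exists_expand_mul_sub {N : ℕ} (h : n ≤ N) {x u : G} (hx : x ∈ c.M N) (hu : u ∈ c.M n) :
    ∃ r ∈ c.M n, c.expand N (x * u) - c.expand N x = c.expand n (r * u) - c.expand n r := by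
  induction N, h using Nat.le_induction generalizing x with
  | base => exact ⟨x, hx, rfl⟩
  | succ N hnN ih =>
    obtain ⟨hcode, hdown⟩ := c.code_and_down_mul_of_mem N hx (c.M_mono hnN hu)
    rw [expand_succ, expand_succ, hcode, hdown, add_sub_add_left_eq_sub]
    exact ih (c.down_mem N x)

lemma inv_mul_mem_of_expand_eq {N : ℕ} (h : n ≤ N) {x y : G} (hx : x ∈ c.M N) (hy : y ∈ c.M N)
    (he : ∀ k, n ≤ k → c.expand N x k = c.expand N y k) : x⁻¹ * y ∈ c.M n := by
  induction N, h using Nat.le_induction generalizing x y with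
  | base => exact mul_mem (inv_mem hx) hy
  | succ N hnN ih =>
    have hcode : c.code N x = c.code N y := by
      rw [← c.expand_succ_apply_self, ← c.expand_succ_apply_self, he N hnN]
    rw [c.inv_mul_eq_of_code_eq N hx hy hcode]
    refine ih (c.down_mem N x) (c.down_mem N y) fun k hk => ?_
    rcases eq_or_ne k N with rfl | hkN
    · rw [c.expand_apply_of_le k le_rfl, c.expand_apply_of_le k le_rfl]
    · rw [← c.expand_succ_apply_of_ne N hkN, ← c.expand_succ_apply_of_ne N hkN, he k hk]

lemma exists_mem_expand_eq (v : c.Digits) (hv : ∀ k, n ≤ k → v k = 0) :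
    ∃ x ∈ c.M n, c.expand n x = v := by
  induction n generalizing v with
  | zero => exact ⟨1, one_mem _, (DFinsupp.ext fun k => (hv k k.zero_le).symm)⟩
  | succ n ih =>
    obtain ⟨m, hm, hmv⟩ := ih (v - DirectSum.of c.Layer n (v n)) fun k hk => by
      rcases eq_or_ne k n with rfl | hkn
      · rw [DirectSum.sub_apply, DirectSum.of_eq_same, sub_self]
      · rw [DirectSum.sub_apply, DirectSum.of_eq_of_ne _ _ _ hkn, hv k (by omega), sub_zero]
    obtain ⟨hcode, hdown⟩ := c.code_sect_mul_and_down_sect_mul n (v n) hm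
    refine ⟨c.sect n (v n) * m, mul_mem (c.sect_mem n _) (c.M_le_succ n hm), ?_⟩
    rw [expand_succ, hcode, hdown, hmv, add_sub_cancel]

open Classical in
def level (x : G) : ℕ := Nat.find (c.exists_mem_M x)

lemma mem_M_level (x : G) : x ∈ c.M (c.level x) := by
  classical
  exact Nat.find_spec (c.exists_mem_M x)

lemma mem_M_of_level_le {x : G} (h : c.level x ≤ n) : x ∈ c.M n := c.M_mono h (c.mem_M_level x)

lemma exists_subset_M {B : Set G} (hB : B.Finite) : ∃ n, B ⊆ c.M n := by
  obtain ⟨n, hn⟩ := (hB.image c.level).bddAbove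
  exact ⟨n, fun u hu => c.mem_M_of_level_le n (hn ⟨u, hu, rfl⟩)⟩

def digits (x : G) : c.Digits := c.expand (c.level x) x

lemma digits_eq_expand {x : G} (hx : x ∈ c.M n) : c.digits x = c.expand n x := by
  classical
  exact (c.expand_eq_of_le n (Nat.find_min' _ hx) (c.mem_M_level x)).symm

lemma digits_bijective : Bijective c.digits := by
  refine ⟨fun x y hxy => ?_, fun v => ?_⟩
  · set N := max (c.level x) (c.level y)
    have hx : x ∈ c.M N := c.mem_M_of_level_le N (le_max_left _ _)
    have hy : y ∈ c.M N := c.mem_M_of_level_le N (le_max_right _ _)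
    rw [c.digits_eq_expand N hx, c.digits_eq_expand N hy] at hxy
    have := c.inv_mul_mem_of_expand_eq 0 N.zero_le hx hy fun k _ => by rw [hxy]
    rwa [c.M_zero, Subgroup.mem_bot, inv_mul_eq_one] at this
  · classical
    obtain ⟨x, hx, hxv⟩ := c.exists_mem_expand_eq (v.support.sup id + 1) v fun k hk => by
      by_contra hne
      have := Finset.le_sup (f := id) (DFinsupp.mem_support_iff.2 hne)
      simp only [id] at this
      omega
    exact ⟨x, (c.digits_eq_expand _ hx).trans hxv⟩

lemma exists_digits_mul_sub (x : G) {u : G} (hu : u ∈ c.M n) :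
    ∃ r ∈ c.M n, c.digits (x * u) - c.digits x = c.expand n (r * u) - c.expand n r := by
  set N := max n (c.level x)
  have hx : x ∈ c.M N := c.mem_M_of_level_le N (le_max_right _ _)
  rw [c.digits_eq_expand N hx, c.digits_eq_expand N (mul_mem hx (c.M_mono (le_max_left _ _) hu))]
  exact c.exists_expand_mul_sub n (le_max_left _ _) hx hu

lemma inv_mul_mem_of_digits_eq {x y : G} (h : ∀ k, n ≤ k → c.digits x k = c.digits y k) :
    x⁻¹ * y ∈ c.M n := by
  set N := max n (max (c.level x) (c.level y))
  have hx : x ∈ c.M N := c.mem_M_of_level_le N (by omega)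
  have hy : y ∈ c.M N := c.mem_M_of_level_le N (by omega)
  rw [c.digits_eq_expand N hx, c.digits_eq_expand N hy] at h
  exact c.inv_mul_mem_of_expand_eq n (le_max_left _ _) hx hy h

lemma pairNorm_code_inv_mul_le {x y : G} (hx : x ∈ c.M (n + 1)) (hy : y ∈ c.M (n + 1)) :
    pairNorm (c.code n (x⁻¹ * y)) ≤ pairNorm (c.code n y - c.code n x) + 1 := by
  have hexp : (c.code n (x⁻¹ * y)).1 = (c.code n y - c.code n x).1 := by
    show c.expMod n (x⁻¹ * y) = c.expMod n y - c.expMod n x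
    rw [eq_sub_iff_add_eq', ← c.expMod_mul n hx (mul_mem (inv_mem hx) hy), mul_inv_cancel_left]
  have := pairNorm_le_natAbs_valMinAbs_add_one (c.code n (x⁻¹ * y))
  rw [hexp] at this
  exact this.trans (Nat.add_le_add_right (Nat.le_add_right _ _) 1)

lemma pairNorm_code_mul_sub_le {w x : G} (hw : w ∈ c.M (n + 1)) (hx : x ∈ c.M (n + 1)) :
    pairNorm (c.code n (w * x) - c.code n x) ≤ (c.expMod n w).valMinAbs.natAbs + 1 := by
  have hexp : (c.code n (w * x) - c.code n x).1 = c.expMod n w := by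
    show c.expMod n (w * x) - c.expMod n x = _
    rw [c.expMod_mul n hw hx, add_sub_cancel_right]
  simpa [hexp] using pairNorm_le_natAbs_valMinAbs_add_one (c.code n (w * x) - c.code n x)

theorem bddAbove_weightedNorm_expand_mul_sub : ∀ n, ∀ w ∈ c.M n,
    BddAbove ((fun x => weightedNorm (c.expand n (w * x) - c.expand n x)) '' c.M n) := by
  intro n
  induction n with
  | zero => exact fun w _ => ⟨0, by rintro _ ⟨x, -, rfl⟩; simp [expand, weightedNorm_zero]⟩
  | succ n ih =>
    intro w hw
    obtain ⟨C, hC⟩ : BddAbove (⋃ ω ∈ Set.range fun v => c.down n (w * c.sect n v),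
        (fun d => weightedNorm (c.expand n (ω * d) - c.expand n d)) '' c.M n) :=
      (c.finite_range_down_mul_sect n hw).bddAbove_biUnion.2 <| by
        rintro _ ⟨v, rfl⟩
        exact ih _ (c.down_mem n _)
    refine ⟨(n + 1) * ((c.expMod n w).valMinAbs.natAbs + 1) + C, ?_⟩
    rintro _ ⟨x, hx, rfl⟩
    have hdown : c.down n (w * x) = c.down n (w * c.sect n (c.code n x)) * c.down n x :=
      eq_mul_of_mul_inv_eq (c.down_mul_mul_inv_down n hw hx)
    have hlow := hC (Set.mem_biUnion ⟨c.code n x, rfl⟩ ⟨c.down n x, c.down_mem n x, rfl⟩)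
    simp only [← hdown] at hlow
    dsimp only
    rw [weightedNorm_expand_succ_sub]
    exact add_le_add (Nat.mul_le_mul_left _ (c.pairNorm_code_mul_sub_le n hw hx)) hlow

lemma exists_weightedNorm_expand_down_le {W : Set G} (hW : W.Finite) (hWM : W ⊆ c.M (n + 1)) :
    ∃ C, ∀ w ∈ W, ∀ x ∈ c.M (n + 1),
      weightedNorm (c.expand n (c.down n (w * x)) - c.expand n (c.down n x)) ≤ C := by
  obtain ⟨C, hC⟩ := hW.bddAbove_biUnion.2 fun w hw =>
    c.bddAbove_weightedNorm_expand_mul_sub (n + 1) w (hWM hw)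
  refine ⟨C, fun w hw x hx => le_trans ?_ (hC (Set.mem_biUnion hw ⟨x, hx, rfl⟩))⟩
  dsimp only
  rw [weightedNorm_expand_succ_sub]
  exact Nat.le_add_left _ _

theorem exists_inv_mul_eq_mul_of_weightedNorm_expand_succ_sub_le (C : ℕ) :
    ∃ S : Set G, S.Finite ∧ ∃ C' : ℕ, ∀ x ∈ c.M (n + 1), ∀ y ∈ c.M (n + 1),
      weightedNorm (c.expand (n + 1) y - c.expand (n + 1) x) ≤ C → ∃ s ∈ S, ∃ q ∈ c.M n,
        ∃ m ∈ c.M n, x⁻¹ * y = s * m ∧ weightedNorm (c.expand n (q * m) - c.expand n q) ≤ C' := by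
  set S := {v : c.Layer n | pairNorm v ≤ C + 1}
  have hS : S.Finite := finite_setOf_pairNorm_le _
  obtain ⟨C₂, hC₂⟩ := c.exists_weightedNorm_expand_down_le n
    (((c.finite_Φ n).prod hS).image fun p : G × c.Layer n => p.1 * c.sect n p.2) <| by
      rintro _ ⟨⟨φ, v⟩, ⟨hφ, -⟩, rfl⟩
      exact mul_mem (c.Φ_le n hφ) (c.sect_mem n v)
  refine ⟨c.sect n '' S, hS.image _, C + C₂, fun x hx y hy hxy => ?_⟩
  rw [weightedNorm_expand_succ_sub] at hxy
  have hz : x⁻¹ * y ∈ c.M (n + 1) := mul_mem (inv_mem hx) hy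
  -- `y = (⁅x, s⁆ * s) * x * down n (x⁻¹ * y)`, where `⁅x, s⁆ * s` ranges over a finite set.
  set s := c.sect n (c.code n (x⁻¹ * y))
  have hv : c.code n (x⁻¹ * y) ∈ S := by
    have := c.pairNorm_code_inv_mul_le n hx hy
    have : pairNorm (c.code n y - c.code n x) ≤ (n + 1) * pairNorm (c.code n y - c.code n x) :=
      Nat.le_mul_of_pos_left _ n.succ_pos
    show _ ≤ C + 1
    omega
  have hwx : ⁅x, s⁆ * s * x = x * s := by simp only [commutatorElement_def]; group
  have hwxM : ⁅x, s⁆ * s * x ∈ c.M (n + 1) := hwx ▸ mul_mem hx (c.sect_mem n _)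
  have hdown : c.down n y = c.down n (⁅x, s⁆ * s * x) * c.down n (x⁻¹ * y) := by
    rw [← (c.code_and_down_mul_of_mem n hwxM (c.down_mem n _)).2, hwx, mul_assoc,
      c.sect_code_mul_down n hz, mul_inv_cancel_left]
  refine ⟨s, ⟨_, hv, rfl⟩, _, c.down_mem n (⁅x, s⁆ * s * x), _, c.down_mem n _,
    (c.sect_code_mul_down n hz).symm, ?_⟩
  rw [← hdown]
  refine (weightedNorm_sub_le _ (c.expand n (c.down n x)) _).trans (add_le_add (by omega) ?_)
  rw [weightedNorm_sub_comm]
  exact hC₂ _ ⟨(⁅x, s⁆, _), ⟨c.commutator_mem_Φ n x hx s (c.sect_mem n _), hv⟩, rfl⟩ x hx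

section Estimates

variable [MetricSpace G] (hinv : ∀ g x y : G, dist (g * x) (g * y) = dist x y)
include hinv

theorem exists_dist_le_of_weightedNorm_expand_sub_le : ∀ n (C : ℕ), ∃ ε, ∀ x ∈ c.M n,
    ∀ y ∈ c.M n, weightedNorm (c.expand n y - c.expand n x) ≤ C → dist x y ≤ ε := by
  intro n
  induction n with
  | zero =>
    refine fun C => ⟨0, fun x hx y hy _ => ?_⟩
    rw [c.M_zero, Subgroup.mem_bot] at hx hy
    simp [hx, hy]
  | succ n ih =>
    intro C
    obtain ⟨S, hS, C', hred⟩ := c.exists_inv_mul_eq_mul_of_weightedNorm_expand_succ_sub_le n C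
    obtain ⟨ε₀, hε₀⟩ := ih C'
    obtain ⟨ε₁, hε₁⟩ := (hS.image (dist 1)).bddAbove
    refine ⟨ε₁ + ε₀, fun x hx y hy hxy => ?_⟩
    obtain ⟨s, hs, q, hq, m, hm, hxy, hqm⟩ := hred x hx y hy hxy
    have hm' : dist 1 m ≤ ε₀ := dist_self_mul hinv q m ▸ hε₀ q hq _ (mul_mem hq hm) hqm
    calc dist x y = dist 1 (s * m) := by rw [← dist_one_inv_mul hinv, hxy]
      _ ≤ dist 1 s + dist s (s * m) := dist_triangle _ _ _
      _ = dist 1 s + dist 1 m := by rw [dist_self_mul hinv]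
      _ ≤ ε₁ + ε₀ := add_le_add (hε₁ ⟨s, hs, rfl⟩) hm'

theorem exists_dist_le_of_weightedNorm_digits_sub_le (C : ℕ) :
    ∃ ε, ∀ x y, weightedNorm (c.digits x - c.digits y) ≤ C → dist x y ≤ ε := by
  obtain ⟨ε, hε⟩ := c.exists_dist_le_of_weightedNorm_expand_sub_le hinv C C
  refine ⟨ε, fun x y hxy => ?_⟩
  have hz : x⁻¹ * y ∈ c.M C := c.inv_mul_mem_of_digits_eq C fun k hk =>
    sub_eq_zero.1 (apply_eq_zero_of_weightedNorm_le hxy hk)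
  obtain ⟨r, hr, hdig⟩ := c.exists_digits_mul_sub C x hz
  rw [mul_inv_cancel_left] at hdig
  have := hε r hr _ (mul_mem hr hz) (by rwa [← hdig, weightedNorm_sub_comm])
  rwa [dist_self_mul hinv, dist_one_inv_mul hinv] at this

theorem exists_weightedNorm_digits_sub_le (hprop : ∀ (x : G) (r : ℝ), {y : G | dist x y ≤ r}.Finite)
    (δ : ℝ) : ∃ C : ℕ, ∀ x y, dist x y ≤ δ → weightedNorm (c.digits x - c.digits y) ≤ C := by
  set B := {u : G | dist 1 u ≤ δ}
  obtain ⟨n, hn⟩ := c.exists_subset_M (hprop 1 δ)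
  set W := ⋃ u ∈ B, (fun r => ⁅r, u⁆ * u) '' (c.M n : Set G)
  have hW : W.Finite := (hprop 1 δ).biUnion fun u _ => by
    simpa [Set.image_image] using (c.finite_commutators n u).image (· * u)
  have hWM : W ⊆ c.M n := by
    refine Set.iUnion₂_subset fun u hu => ?_
    rintro _ ⟨r, hr, rfl⟩
    have hu : u ∈ c.M n := hn hu
    exact mul_mem (mul_mem (mul_mem (mul_mem hr hu) (inv_mem hr)) (inv_mem hu)) hu
  obtain ⟨C, hC⟩ : BddAbove (⋃ w ∈ W,
      (fun x => weightedNorm (c.expand n (w * x) - c.expand n x)) '' c.M n) :=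
    hW.bddAbove_biUnion.2 fun w hw => c.bddAbove_weightedNorm_expand_mul_sub n w (hWM hw)
  refine ⟨C, fun x y hxy => ?_⟩
  have hu : x⁻¹ * y ∈ B := by
    show dist 1 _ ≤ δ
    rwa [dist_one_inv_mul hinv]
  obtain ⟨r, hr, hdig⟩ := c.exists_digits_mul_sub n x (hn hu)
  rw [mul_inv_cancel_left] at hdig
  rw [weightedNorm_sub_comm, hdig, show r * (x⁻¹ * y) = ⁅r, x⁻¹ * y⁆ * (x⁻¹ * y) * r by
    simp only [commutatorElement_def]; group]
  exact hC (Set.mem_biUnion (Set.mem_biUnion hu ⟨r, hr, rfl⟩) ⟨r, hr, rfl⟩)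

end Estimates

end FinByAbFiltration

section LocallyFiniteByAbelian

variable {G : Type} [Group G] [MetricSpace G] [Countable G]

theorem isBijCoarselyEquivAbelian_of_locallyFiniteByAbelian
    (hinv : ∀ g x y : G, dist (g * x) (g * y) = dist x y)
    (hprop : ∀ (x : G) (r : ℝ), {y : G | dist x y ≤ r}.Finite) (h : LocallyFiniteByAbelian G) :
    IsBijCoarselyEquivAbelian G := by
  obtain ⟨c⟩ := FinByAbFiltration.nonempty_of_locallyFiniteByAbelian h
  refine isBijCoarselyEquivAbelian_of_groupNorm weightedGroupNorm (fun r => ?_)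
    (Multiplicative.ofAdd ∘ c.digits) (Multiplicative.ofAdd.bijective.comp c.digits_bijective)
    (fun δ => ?_) (fun δ => ?_)
  · exact ((finite_setOf_weightedNorm_le ⌊r⌋₊).preimage
      Multiplicative.toAdd.injective.injOn).subset fun v hv => Nat.le_floor hv
  · obtain ⟨C, hC⟩ := c.exists_weightedNorm_digits_sub_le hinv hprop δ
    exact ⟨C, fun x y hxy => (Nat.cast_le (α := ℝ)).2 (hC x y hxy)⟩
  · obtain ⟨ε, hε⟩ := c.exists_dist_le_of_weightedNorm_digits_sub_le hinv ⌊δ⌋₊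
    exact ⟨ε, fun x y hxy => hε x y (Nat.le_floor hxy)⟩

end LocallyFiniteByAbelian

end

/-- Every countable group with a proper left-invariant metric that is abelian-by-finite
or locally finite-by-abelian is bijectively coarsely equivalent to some countable
abelian group endowed with a proper left-invariant metric. -/
theorem bijectively_coarsely_equiv_abelian_of_abelianByFinite_or_locallyFiniteByAbelian
    (G : Type) [Group G] [Countable G] [MetricSpace G]
    (hinv : ∀ g x y : G, dist (g * x) (g * y) = dist x y)
    (hprop : ∀ (x : G) (r : ℝ), {y : G | dist x y ≤ r}.Finite)
    (hG : AbelianByFinite G ∨ LocallyFiniteByAbelian G) :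
    ∃ (A : Type) (_ : CommGroup A) (_ : MetricSpace A), Countable A ∧
      (∀ g x y : A, dist (g * x) (g * y) = dist x y) ∧
      (∀ (x : A) (r : ℝ), {y : A | dist x y ≤ r}.Finite) ∧
      ∃ F : G → A, Function.Bijective F ∧
        (∀ δ : ℝ, 0 ≤ δ → ∃ ε : ℝ, 0 ≤ ε ∧
          ∀ x y : G, dist x y ≤ δ → dist (F x) (F y) ≤ ε) ∧
        (∀ δ : ℝ, 0 ≤ δ → ∃ ε : ℝ, 0 ≤ ε ∧
          ∀ x y : G, dist (F x) (F y) ≤ δ → dist x y ≤ ε) := by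
  rcases hG with h | h
  · exact isBijCoarselyEquivAbelian_of_abelianByFinite hinv hprop h
  · exact isBijCoarselyEquivAbelian_of_locallyFiniteByAbelian hinv hprop h
end

section
/- A subgroup H of a countable group G is quasi-normal in G if and only if the coset space G/H admits a proper G-invariant metric. -/
/-- `d` is a metric (as a two-variable real function). -/
def IsMetricFun {X : Type*} (d : X → X → ℝ) : Prop :=
  (∀ x y : X, d x y = 0 ↔ x = y) ∧ (∀ x y : X, d x y = d y x) ∧
    (∀ x y z : X, d x z ≤ d x y + d y z)

/-- A subgroup `H` of a group `G` is quasi-normal: for every `x ∈ G` there is a finite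
set `F ⊆ G` with `x⁻¹Hx ⊆ F·H`. -/
def QuasiNormal {G : Type*} [Group G] (H : Subgroup G) : Prop :=
  ∀ x : G, ∃ F : Finset G, ∀ h ∈ H, ∃ f ∈ F, ∃ h' ∈ H, x⁻¹ * h * x = f * h'


/-!
Since `H` fixes the coset `H`, a `G`-invariant metric maps each `H`-orbit in `G ⧸ H` into a
sphere about `H`; properness makes these orbits finite, and finiteness of the `H`-orbit of `xH`
is quasi-normality at `x`.

Conversely, pick a weight `w : G → ℕ`, positive, symmetric and with finite sublevel sets (this
uses countability), and let `ℓ g` be the least total weight `w t₁ + ⋯ + w tₙ` with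
`g ∈ H t₁ H ⋯ tₙ H`. Then `ℓ` is a group seminorm vanishing exactly on `H`, so
`d (xH) (yH) = ℓ (x⁻¹ y)` is a `G`-invariant metric. An element with `ℓ g ≤ n` is a product of at
most `n` letters from the finite set `{w ≤ n}`, interleaved with elements of `H`; finiteness of
the `H`-orbits shows, by induction on the number of letters, that such products lie in finitely
many cosets, so balls are finite.
-/

open MulAction

section QuasiNormal

variable {G : Type*} [Group G]

theorem quasiNormal_iff_orbit_finite (H : Subgroup G) :
    QuasiNormal H ↔ ∀ q : G ⧸ H, (orbit H q).Finite := by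
  constructor
  · intro hQ q
    induction q using QuotientGroup.induction_on with | H x => ?_
    obtain ⟨F, hF⟩ := hQ x
    refine (F.finite_toSet.image fun f => ((x * f : G) : G ⧸ H)).subset ?_
    rintro _ ⟨⟨h, hh⟩, rfl⟩
    obtain ⟨f, hf, h', hh', hconj⟩ := hF h hh
    refine ⟨f, hf, QuotientGroup.eq.2 ?_⟩
    have : (x * f)⁻¹ * (h * x) = h' := by
      rw [← mul_right_inj f, ← hconj]; group
    exact this ▸ hh'
  · intro hO x
    classical
    refine ⟨(hO x).toFinset.image fun q => x⁻¹ * q.out, fun h hh => ?_⟩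
    set q : G ⧸ H := (h : G) • (x : G ⧸ H)
    have hq : q ∈ orbit H (x : G ⧸ H) := mem_orbit _ (⟨h, hh⟩ : H)
    refine ⟨x⁻¹ * q.out, Finset.mem_image_of_mem _ ((hO x).mem_toFinset.2 hq),
      q.out⁻¹ * (h * x), ?_, by group⟩
    exact QuotientGroup.eq.1 q.out_eq'

theorem orbit_finite_of_proper_invariant {X : Type*} [MulAction G X] (H : Subgroup G)
    (d : X → X → ℝ) (hd : ∀ (g : G) (u v : X), d (g • u) (g • v) = d u v)
    (hproper : ∀ (u : X) (r : ℝ), {v | d u v ≤ r}.Finite) {o : X}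
    (ho : H ≤ stabilizer G o) (q : X) : (orbit H q).Finite := by
  refine (hproper o (d o q)).subset ?_
  rintro _ ⟨⟨h, hh⟩, rfl⟩
  calc d o ((h : G) • q) = d ((h : G) • o) ((h : G) • q) := by rw [mem_stabilizer_iff.1 (ho hh)]
    _ ≤ d o q := (hd h o q).le

end QuasiNormal

namespace Subgroup

variable {G : Type*} [Group G] (H : Subgroup G)

/-- `H.relWord [t₁, …, tₙ]` is the set `H t₁ H ⋯ tₙ H`. -/
def relWord : List G → Set G
  | [] => H
  | t :: L => {g | ∃ h ∈ H, ∃ y ∈ relWord L, g = h * t * y}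

variable {H}

theorem mem_relWord_singleton (t : G) : t ∈ H.relWord [t] :=
  ⟨1, H.one_mem, 1, H.one_mem, by group⟩

theorem mul_mem_relWord_of_mem {h g : G} (hh : h ∈ H) {L : List G} (hg : g ∈ H.relWord L) :
    h * g ∈ H.relWord L := by
  cases L with
  | nil => exact H.mul_mem hh hg
  | cons t L =>
    obtain ⟨h', hh', y, hy, rfl⟩ := hg
    exact ⟨h * h', H.mul_mem hh hh', y, hy, by group⟩

theorem mul_mem_relWord_append {a b : G} {L₁ L₂ : List G} (ha : a ∈ H.relWord L₁)
    (hb : b ∈ H.relWord L₂) : a * b ∈ H.relWord (L₁ ++ L₂) := by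
  induction L₁ generalizing a with
  | nil => exact mul_mem_relWord_of_mem ha hb
  | cons t L ih =>
    obtain ⟨h, hh, y, hy, rfl⟩ := ha
    exact ⟨h, hh, y * b, ih hy, by group⟩

theorem inv_mem_relWord {g : G} {L : List G} (hg : g ∈ H.relWord L) :
    g⁻¹ ∈ H.relWord (L.map (·⁻¹)).reverse := by
  induction L generalizing g with
  | nil => exact H.inv_mem hg
  | cons t L ih =>
    obtain ⟨h, hh, y, hy, rfl⟩ := hg
    have hlast : t⁻¹ * h⁻¹ ∈ H.relWord [t⁻¹] :=
      ⟨1, H.one_mem, h⁻¹, H.inv_mem hh, by group⟩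
    simpa [mul_assoc] using mul_mem_relWord_append (ih hy) hlast

theorem finite_image_mk_relWord (hH : ∀ q : G ⧸ H, (orbit H q).Finite) {T : Set G}
    (hT : T.Finite) (n : ℕ) :
    {q : G ⧸ H | ∃ L : List G, L.length ≤ n ∧ (∀ t ∈ L, t ∈ T) ∧
      ∃ g ∈ H.relWord L, (g : G ⧸ H) = q}.Finite := by
  induction n with
  | zero =>
    refine (Set.finite_singleton ((1 : G) : G ⧸ H)).subset ?_
    rintro _ ⟨L, hL, -, g, hg, rfl⟩
    obtain rfl : L = [] := List.length_eq_zero_iff.1 (Nat.le_zero.1 hL)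
    exact QuotientGroup.eq.2 (by simpa using H.inv_mem hg)
  | succ n ih =>
    refine (ih.union (hT.biUnion fun t _ => ih.biUnion fun q _ => hH (t • q))).subset ?_
    rintro _ ⟨L, hL, hLT, g, hg, rfl⟩
    cases L with
    | nil => exact Or.inl ⟨[], Nat.zero_le n, hLT, g, hg, rfl⟩
    | cons t L =>
      obtain ⟨h, hh, y, hy, rfl⟩ := hg
      refine Or.inr (Set.mem_biUnion (hLT t List.mem_cons_self)
        (Set.mem_biUnion (x := (y : G ⧸ H)) ?_ ⟨⟨h, hh⟩, ?_⟩))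
      · exact ⟨L, Nat.le_of_succ_le_succ hL, fun s hs => hLT s (List.mem_cons_of_mem t hs),
          y, hy, rfl⟩
      · show ((h * (t * y) : G) : G ⧸ H) = _
        rw [mul_assoc]

variable (H) (w : G → ℕ)

noncomputable def relLength (g : G) : ℕ :=
  sInf {n | ∃ L : List G, g ∈ H.relWord L ∧ (L.map w).sum = n}

variable {H w}

variable (H w) in
theorem exists_relWord_sum_eq_relLength (g : G) :
    ∃ L : List G, g ∈ H.relWord L ∧ (L.map w).sum = H.relLength w g :=
  Nat.sInf_mem (s := {n | ∃ L : List G, g ∈ H.relWord L ∧ (L.map w).sum = n})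
    ⟨w g, [g], mem_relWord_singleton g, by simp⟩

theorem relLength_le {g : G} {L : List G} (hg : g ∈ H.relWord L) :
    H.relLength w g ≤ (L.map w).sum :=
  Nat.sInf_le ⟨L, hg, rfl⟩

theorem relLength_mul_le (a b : G) :
    H.relLength w (a * b) ≤ H.relLength w a + H.relLength w b := by
  obtain ⟨L₁, ha, hL₁⟩ := exists_relWord_sum_eq_relLength H w a
  obtain ⟨L₂, hb, hL₂⟩ := exists_relWord_sum_eq_relLength H w b
  simpa [hL₁, hL₂] using relLength_le (w := w) (mul_mem_relWord_append ha hb)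

theorem relLength_inv_le (hw : ∀ g, w g⁻¹ = w g) (g : G) :
    H.relLength w g⁻¹ ≤ H.relLength w g := by
  obtain ⟨L, hg, hL⟩ := exists_relWord_sum_eq_relLength H w g
  simpa [Function.comp_def, hw, hL] using relLength_le (w := w) (inv_mem_relWord hg)

theorem relLength_eq_zero_iff (hw : ∀ g, 1 ≤ w g) {g : G} :
    H.relLength w g = 0 ↔ g ∈ H := by
  refine ⟨fun h0 => ?_, fun hg => Nat.le_zero.1 (relLength_le (L := []) hg)⟩
  obtain ⟨_ | ⟨t, L⟩, hg, hL⟩ := exists_relWord_sum_eq_relLength H w g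
  · exact hg
  · have := hw t
    simp only [List.map_cons, List.sum_cons, h0] at hL
    omega

variable (H w) in
noncomputable def relLengthSeminorm (hw : ∀ g, w g⁻¹ = w g) : GroupSeminorm G where
  toFun g := H.relLength w g
  map_one' := by
    simpa using Nat.le_zero.1 (relLength_le (H := H) (w := w) (L := []) H.one_mem)
  mul_le' a b := by exact_mod_cast relLength_mul_le a b
  inv' g := by
    refine congrArg Nat.cast (le_antisymm (relLength_inv_le hw g) ?_)
    simpa using relLength_inv_le hw g⁻¹

theorem finite_image_mk_relLength_le (hH : ∀ q : G ⧸ H, (orbit H q).Finite)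
    (hw : ∀ g, 1 ≤ w g) (hw_fin : ∀ n, {g | w g ≤ n}.Finite) (n : ℕ) :
    (((↑) : G → G ⧸ H) '' {g | H.relLength w g ≤ n}).Finite := by
  refine (finite_image_mk_relWord hH (hw_fin n) n).subset ?_
  rintro _ ⟨g, hg, rfl⟩
  obtain ⟨L, hgL, hL⟩ := exists_relWord_sum_eq_relLength H w g
  have hsum : (L.map w).sum ≤ n := hL ▸ hg
  have hlen : L.length ≤ (L.map w).sum := by
    simpa using List.length_le_sum_of_one_le (L.map w) (by simpa using fun t _ => hw t)
  refine ⟨L, hlen.trans hsum, fun t ht => ?_, g, hgL, rfl⟩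
  exact (List.single_le_sum (by simp) _ (List.mem_map_of_mem ht)).trans hsum

end Subgroup

namespace GroupSeminorm

variable {G : Type*} [Group G]

noncomputable def cosetDist (f : GroupSeminorm G) (H : Subgroup G) (u v : G ⧸ H) : ℝ :=
  f (u.out⁻¹ * v.out)

variable {f : GroupSeminorm G} {H : Subgroup G}

theorem cosetDist_mk (hf : ∀ g, f g = 0 ↔ g ∈ H) (x y : G) :
    f.cosetDist H x y = f (x⁻¹ * y) := by
  have key : ∀ x y x' y' : G, (x : G ⧸ H) = x' → (y : G ⧸ H) = y' →
      f (x'⁻¹ * y') ≤ f (x⁻¹ * y) := by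
    intro x y x' y' hx hy
    have hx0 : f (x⁻¹ * x')⁻¹ = 0 := by rw [map_inv_eq_map, hf]; exact QuotientGroup.eq.1 hx
    have hy0 : f (y⁻¹ * y') = 0 := (hf _).2 (QuotientGroup.eq.1 hy)
    calc f (x'⁻¹ * y') = f ((x⁻¹ * x')⁻¹ * (x⁻¹ * y) * (y⁻¹ * y')) := by group
      _ ≤ f (x⁻¹ * x')⁻¹ + f (x⁻¹ * y) + f (y⁻¹ * y') :=
        (map_mul_le_add f _ _).trans (add_le_add_left (map_mul_le_add f _ _) _)
      _ = f (x⁻¹ * y) := by rw [hx0, hy0, zero_add, add_zero]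
  exact le_antisymm (key _ _ _ _ (QuotientGroup.out_eq' _).symm (QuotientGroup.out_eq' _).symm)
    (key _ _ _ _ (QuotientGroup.out_eq' _) (QuotientGroup.out_eq' _))

theorem isMetricFun_cosetDist (hf : ∀ g, f g = 0 ↔ g ∈ H) : IsMetricFun (f.cosetDist H) := by
  refine ⟨fun u v => ?_, fun u v => ?_, fun u v w => ?_⟩
  · induction u using QuotientGroup.induction_on
    induction v using QuotientGroup.induction_on
    rw [cosetDist_mk hf, hf, QuotientGroup.eq]
  · induction u using QuotientGroup.induction_on
    induction v using QuotientGroup.induction_on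
    rw [cosetDist_mk hf, cosetDist_mk hf, ← map_inv_eq_map f, mul_inv_rev, inv_inv]
  · induction u using QuotientGroup.induction_on with | H x => ?_
    induction v using QuotientGroup.induction_on with | H y => ?_
    induction w using QuotientGroup.induction_on with | H z => ?_
    simp only [cosetDist_mk hf]
    calc f (x⁻¹ * z) = f ((x⁻¹ * y) * (y⁻¹ * z)) := by group
      _ ≤ f (x⁻¹ * y) + f (y⁻¹ * z) := map_mul_le_add f _ _

theorem cosetDist_smul (hf : ∀ g, f g = 0 ↔ g ∈ H) (g : G) (u v : G ⧸ H) :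
    f.cosetDist H (g • u) (g • v) = f.cosetDist H u v := by
  induction u using QuotientGroup.induction_on
  induction v using QuotientGroup.induction_on
  simp only [MulAction.Quotient.smul_coe, cosetDist_mk hf, smul_eq_mul, mul_inv_rev,
    mul_assoc, inv_mul_cancel_left]

theorem finite_ball_cosetDist (hf : ∀ g, f g = 0 ↔ g ∈ H)
    (hfin : ∀ r, (((↑) : G → G ⧸ H) '' {g | f g ≤ r}).Finite) (u : G ⧸ H) (r : ℝ) :
    {v | f.cosetDist H u v ≤ r}.Finite := by
  induction u using QuotientGroup.induction_on with | H x => ?_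
  refine ((hfin r).image (x • ·)).subset fun v hv => ?_
  induction v using QuotientGroup.induction_on with | H y => ?_
  rw [Set.mem_ofPred_eq, cosetDist_mk hf] at hv
  exact ⟨_, ⟨_, hv, rfl⟩, by simp⟩

end GroupSeminorm

theorem Countable.exists_weight (G : Type*) [Group G] [Countable G] :
    ∃ w : G → ℕ, (∀ g, 1 ≤ w g) ∧ (∀ g, w g⁻¹ = w g) ∧ ∀ n, {g | w g ≤ n}.Finite := by
  obtain ⟨e, he⟩ := Countable.exists_injective_nat G
  refine ⟨fun g => max (e g) (e g⁻¹) + 1, fun g => Nat.le_add_left 1 _,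
    fun g => by simp only [inv_inv, max_comm], fun n => ?_⟩
  exact ((Set.finite_Iic n).preimage he.injOn).subset fun g hg =>
    (le_max_left _ _).trans (Nat.le_of_succ_le hg)

/-- A subgroup `H` of a countable group `G` is quasi-normal iff the coset space `G ⧸ H`
admits a proper `G`-invariant metric. -/
theorem quasiNormal_iff_exists_proper_invariant_metric
    (G : Type) [Group G] [Countable G] (H : Subgroup G) :
    QuasiNormal H ↔
      ∃ d : G ⧸ H → G ⧸ H → ℝ, IsMetricFun d ∧
        (∀ (g : G) (u v : G ⧸ H), d (g • u) (g • v) = d u v) ∧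
        (∀ (u : G ⧸ H) (r : ℝ), {v : G ⧸ H | d u v ≤ r}.Finite) := by
  rw [quasiNormal_iff_orbit_finite]
  constructor
  · intro hH
    obtain ⟨w, hw_pos, hw_inv, hw_fin⟩ := Countable.exists_weight G
    set f := H.relLengthSeminorm w hw_inv
    have hf : ∀ g, f g = 0 ↔ g ∈ H := fun g =>
      Nat.cast_eq_zero.trans (Subgroup.relLength_eq_zero_iff hw_pos)
    have hf_fin : ∀ r : ℝ, (((↑) : G → G ⧸ H) '' {g | f g ≤ r}).Finite := fun r =>
      (Subgroup.finite_image_mk_relLength_le hH hw_pos hw_fin ⌊r⌋₊).subset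
        (Set.image_mono fun g hg => Nat.le_floor hg)
    exact ⟨f.cosetDist H, GroupSeminorm.isMetricFun_cosetDist hf,
      GroupSeminorm.cosetDist_smul hf, GroupSeminorm.finite_ball_cosetDist hf hf_fin⟩
  · rintro ⟨d, -, hd, hproper⟩
    exact orbit_finite_of_proper_invariant H d hd hproper (MulAction.stabilizer_quotient H).ge
end

section
/- Let H be a subgroup of a countable group G. The coset space G/H admits a proper G-invariant ultrametric if and only if H has locally finite index in G. -/
/-- A subgroup `H` of a group `G` has locally finite index in `G`: `H` has finite index
in every subgroup of `G` generated by `H ∪ F` for a finite set `F ⊆ G`. -/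
def LocallyFiniteIndex {G : Type*} [Group G] (H : Subgroup G) : Prop :=
  ∀ F : Finset G, H.relIndex (H ⊔ Subgroup.closure (F : Set G)) ≠ 0

/-!
If `d` is a proper invariant ultrametric on `G ⧸ H`, the ultrametric inequality makes the elements
moving the base coset `H` by at most `R` a subgroup. For `R` large it contains `H` and any given
finite set, and `H` has finite index in it because the corresponding orbit lies in a finite ball.

Conversely, enumerate `G` as `g₀, g₁, …` and let `Kₙ = ⟨H, g₀, …, gₙ₋₁⟩`. Then
`d(xH, yH) = min {n | x⁻¹y ∈ Kₙ}` is an invariant ultrametric, and its ball of radius `n`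
about `xH` is the set of `H`-cosets inside `xKₙ`, which is finite because `H` has locally
finite index.
-/

open MulAction Subgroup

variable {G X : Type*} [Group G] [MulAction G X]

variable (G) in
def IsProperInvariantUltrametric (d : X → X → ℝ) : Prop :=
  IsMetricFun d ∧ (∀ u v w : X, d u w ≤ max (d u v) (d v w)) ∧
    (∀ (g : G) (u v : X), d (g • u) (g • v) = d u v) ∧
    ∀ (u : X) (r : ℝ), {v : X | d u v ≤ r}.Finite

section Ball

variable {d : X → X → ℝ}

def ballSubgroup (hsymm : ∀ x y, d x y = d y x) (hult : ∀ x y z, d x z ≤ max (d x y) (d y z))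
    (hinv : ∀ (g : G) x y, d (g • x) (g • y) = d x y) (o : X) (R : ℝ) (hR : d o o ≤ R) :
    Subgroup G where
  carrier := {g | d o (g • o) ≤ R}
  one_mem' := by simpa using hR
  mul_mem' {a b} ha hb := calc
    d o ((a * b) • o) ≤ max (d o (a • o)) (d (a • o) (a • b • o)) := by
      rw [mul_smul]; exact hult ..
    _ ≤ R := max_le ha (by rwa [hinv])
  inv_mem' {a} ha := calc
    d o (a⁻¹ • o) = d o (a • o) := by rw [← hinv a, smul_inv_smul, hsymm]
    _ ≤ R := ha

variable {hsymm : ∀ x y, d x y = d y x} {hult : ∀ x y z, d x z ≤ max (d x y) (d y z)}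
  {hinv : ∀ (g : G) x y, d (g • x) (g • y) = d x y} {o : X} {R : ℝ} {hR : d o o ≤ R}

lemma mem_ballSubgroup {g : G} :
    g ∈ ballSubgroup hsymm hult hinv o R hR ↔ d o (g • o) ≤ R :=
  Iff.rfl

lemma stabilizer_le_ballSubgroup : stabilizer G o ≤ ballSubgroup hsymm hult hinv o R hR :=
  fun g hg => by rwa [mem_ballSubgroup, mem_stabilizer_iff.mp hg]

lemma relIndex_stabilizer_ballSubgroup_ne_zero (hball : {y | d o y ≤ R}.Finite) :
    (stabilizer G o).relIndex (ballSubgroup hsymm hult hinv o R hR) ≠ 0 := by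
  set S := ballSubgroup hsymm hult hinv o R hR
  have hsub : orbit S o ⊆ {y | d o y ≤ R} := by
    rintro _ ⟨g, rfl⟩
    exact g.2
  have hstab : (stabilizer G o).subgroupOf S = stabilizer S o := by ext; rfl
  rw [relIndex, hstab, index_stabilizer]
  exact ((Set.ncard_pos (hball.subset hsub)).mpr ⟨o, mem_orbit_self o⟩).ne'

end Ball

theorem locallyFiniteIndex_stabilizer_of_ultrametric {d : X → X → ℝ}
    (hsymm : ∀ x y, d x y = d y x) (hult : ∀ x y z, d x z ≤ max (d x y) (d y z))
    (hinv : ∀ (g : G) x y, d (g • x) (g • y) = d x y) (o : X)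
    (hball : ∀ r, {y | d o y ≤ r}.Finite) : LocallyFiniteIndex (stabilizer G o) := by
  intro F
  obtain ⟨M, hM⟩ := (F.image fun g => d o (g • o)).exists_le
  set S := ballSubgroup hsymm hult hinv o (max M (d o o)) (le_max_right _ _)
  have hF : closure (F : Set G) ≤ S := (closure_le S).mpr fun g hg =>
    (hM _ (Finset.mem_image_of_mem _ hg)).trans (le_max_left _ _)
  have hle : stabilizer G o ⊔ closure (F : Set G) ≤ S := sup_le stabilizer_le_ballSubgroup hF
  exact fun h =>
    relIndex_stabilizer_ballSubgroup_ne_zero (hball _) (relIndex_eq_zero_of_le_right hle h)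

lemma finite_setOf_quotientMapOfLE_eq {s t : Subgroup G} (hst : s ≤ t) (hfin : s.relIndex t ≠ 0)
    (u : G ⧸ s) : {v | quotientMapOfLE hst v = quotientMapOfLE hst u}.Finite := by
  have : (s.subgroupOf t).FiniteIndex := ⟨hfin⟩
  refine Set.Finite.of_finite_image (f := fun v => (quotientEquivProdOfLE hst v).2)
    (Set.toFinite _) fun v hv w hw hvw => (quotientEquivProdOfLE hst).injective ?_
  exact Prod.ext (hv.trans hw.symm) hvw

lemma quotientMapOfLE_smul {s t : Subgroup G} (hst : s ≤ t) (g : G) (u : G ⧸ s) :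
    quotientMapOfLE hst (g • u) = g • quotientMapOfLE hst u := by
  induction u using QuotientGroup.induction_on
  rfl

lemma quotientMapOfLE_mk_eq_mk_iff {s t : Subgroup G} (hst : s ≤ t) (x y : G) :
    quotientMapOfLE hst (x : G ⧸ s) = quotientMapOfLE hst (y : G ⧸ s) ↔ x⁻¹ * y ∈ t := by
  simp [QuotientGroup.eq]

section Chain

variable {K : ℕ → Subgroup G}

def chainProj (hK : Monotone K) (n : ℕ) : G ⧸ K 0 → G ⧸ K n :=
  quotientMapOfLE (hK n.zero_le)

noncomputable def chainDist (hK : Monotone K) (u v : G ⧸ K 0) : ℕ :=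
  sInf {n | chainProj hK n u = chainProj hK n v}

variable (hK : Monotone K)

lemma chainProj_eq_of_le {m n : ℕ} (hmn : m ≤ n) {u v : G ⧸ K 0}
    (h : chainProj hK m u = chainProj hK m v) : chainProj hK n u = chainProj hK n v := by
  induction u using QuotientGroup.induction_on
  induction v using QuotientGroup.induction_on
  simp only [chainProj, quotientMapOfLE_mk_eq_mk_iff] at h ⊢
  exact hK hmn h

lemma chainProj_zero_eq_iff {u v : G ⧸ K 0} : chainProj hK 0 u = chainProj hK 0 v ↔ u = v := by
  induction u using QuotientGroup.induction_on
  induction v using QuotientGroup.induction_on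
  rw [chainProj, quotientMapOfLE_mk_eq_mk_iff, QuotientGroup.eq]

lemma chainProj_chainDist (hexhaust : ∀ g, ∃ n, g ∈ K n) (u v : G ⧸ K 0) :
    chainProj hK (chainDist hK u v) u = chainProj hK (chainDist hK u v) v := by
  induction u using QuotientGroup.induction_on with | H x => ?_
  induction v using QuotientGroup.induction_on with | H y => ?_
  obtain ⟨n, hn⟩ := hexhaust (x⁻¹ * y)
  exact Nat.sInf_mem (s := {n | chainProj hK n x = chainProj hK n y})
    ⟨n, (quotientMapOfLE_mk_eq_mk_iff _ x y).mpr hn⟩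

lemma chainDist_le_iff (hexhaust : ∀ g, ∃ n, g ∈ K n) {u v : G ⧸ K 0} {n : ℕ} :
    chainDist hK u v ≤ n ↔ chainProj hK n u = chainProj hK n v :=
  ⟨fun h => chainProj_eq_of_le hK h (chainProj_chainDist hK hexhaust u v),
    fun h => Nat.sInf_le h⟩

end Chain

theorem exists_proper_invariant_ultrametric_of_chain {K : ℕ → Subgroup G} (hK : Monotone K)
    (hexhaust : ∀ g, ∃ n, g ∈ K n) (hfin : ∀ n, (K 0).relIndex (K n) ≠ 0) :
    ∃ d : G ⧸ K 0 → G ⧸ K 0 → ℝ, IsProperInvariantUltrametric G d := by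
  have hle : ∀ {u v : G ⧸ K 0} {n : ℕ},
      chainDist hK u v ≤ n ↔ chainProj hK n u = chainProj hK n v := chainDist_le_iff hK hexhaust
  have hult (u v w : G ⧸ K 0) : chainDist hK u w ≤ max (chainDist hK u v) (chainDist hK v w) :=
    hle.mpr ((hle.mp (le_max_left _ _)).trans (hle.mp (le_max_right _ _)))
  refine ⟨fun u v => chainDist hK u v, ⟨fun u v => ?_, fun u v => ?_, fun u v w => ?_⟩,
    fun u v w => ?_, fun g u v => ?_, fun u r => ?_⟩
  · rw [Nat.cast_eq_zero, ← Nat.le_zero, hle, chainProj_zero_eq_iff]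
  · exact congrArg Nat.cast (eq_of_forall_ge_iff fun n => by rw [hle, hle, eq_comm])
  · exact (Nat.cast_le.mpr (hult u v w)).trans (by
      rw [Nat.cast_max]; exact max_le_add_of_nonneg (Nat.cast_nonneg _) (Nat.cast_nonneg _))
  · dsimp only
    exact_mod_cast hult u v w
  · refine congrArg Nat.cast (eq_of_forall_ge_iff fun n => ?_)
    rw [hle, hle, chainProj, quotientMapOfLE_smul, quotientMapOfLE_smul, smul_left_cancel_iff]
  · refine (finite_setOf_quotientMapOfLE_eq (hK (Nat.zero_le ⌊r⌋₊)) (hfin _) u).subset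
      fun v hv => (hle.mp (Nat.le_floor hv)).symm

lemma exists_chain_of_locallyFiniteIndex [Countable G] {H : Subgroup G}
    (hH : LocallyFiniteIndex H) :
    ∃ K : ℕ → Subgroup G, K 0 = H ∧ Monotone K ∧ (∀ g, ∃ n, g ∈ K n) ∧
      ∀ n, H.relIndex (K n) ≠ 0 := by
  classical
  obtain ⟨f, hf⟩ := exists_surjective_nat G
  refine ⟨fun n => H ⊔ closure ((Finset.range n).image f : Set G), by simp, fun m n hmn => ?_,
    fun g => ?_, fun n => hH _⟩
  · exact sup_le_sup_left (Subgroup.closure_mono (by gcongr)) H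
  · obtain ⟨m, rfl⟩ := hf g
    exact ⟨m + 1, mem_sup_right <|
      subset_closure (Finset.mem_image_of_mem f (Finset.self_mem_range_succ m))⟩

/-- For a subgroup `H` of a countable group `G`, the coset space `G ⧸ H` admits a proper
`G`-invariant ultrametric iff `H` has locally finite index in `G`. -/
theorem exists_proper_invariant_ultrametric_iff_locallyFiniteIndex
    (G : Type) [Group G] [Countable G] (H : Subgroup G) :
    (∃ d : G ⧸ H → G ⧸ H → ℝ, IsMetricFun d ∧
      (∀ u v w : G ⧸ H, d u w ≤ max (d u v) (d v w)) ∧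
      (∀ (g : G) (u v : G ⧸ H), d (g • u) (g • v) = d u v) ∧
      (∀ (u : G ⧸ H) (r : ℝ), {v : G ⧸ H | d u v ≤ r}.Finite)) ↔
    LocallyFiniteIndex H := by
  constructor
  · rintro ⟨d, ⟨-, hsymm, -⟩, hult, hinv, hball⟩
    simpa using
      locallyFiniteIndex_stabilizer_of_ultrametric hsymm hult hinv _ (hball ((1 : G) : G ⧸ H))
  · intro hH
    obtain ⟨K, rfl, hK, hexhaust, hfin⟩ := exists_chain_of_locallyFiniteIndex hH
    exact exists_proper_invariant_ultrametric_of_chain hK hexhaust hfin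
end

section
/- Let H be a subgroup of locally finite index in a countable group G, endow G with a proper left-invariant metric and G/H with a proper G-invariant metric, and let q : G → G/H, q(x) = xH, be the quotient map. Then for every subsemigroup S of G with S·H = G, the map q has a bornologous section s : G/H → G with s(G/H) ⊆ S (i.e., q(s(u)) = u for all u ∈ G/H). -/
/-!
Enumerate `G` and let `K n` be generated by `H` and the first `n` elements: then
`H = K 0 ≤ K 1 ≤ ⋯` exhausts `G` and `H` has finite index in every `K n`. Pick transversals
`t n` of the left cosets of `K n` inside `S`, except that the trivial coset is represented by
`1`, and fix `σ ∈ S ∩ H`. Peeling off transversal elements from the left gives every `x` a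
normal form `t_{n-1} ⋯ t_0 σ ∈ S` of the coset `xH`, which stops changing once `x ∈ K n`.
Right multiplication by `d ∈ K m` only affects the last `m` factors, so `s(xH)⁻¹ s(xdH)` takes
finitely many values for fixed `d`. As `dq`-balls are finite and both metrics are invariant,
this bounds `dist (s u) (s v)` in terms of `dq u v`.
-/

open Set Pointwise

section

variable {G : Type*} [Group G]

theorem exists_filtration_of_locallyFiniteIndex [Countable G]
    {H : Subgroup G} (hH : LocallyFiniteIndex H) :
    ∃ K : ℕ → Subgroup G, Monotone K ∧ K 0 = H ∧ (∀ x, ∃ n, x ∈ K n) ∧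
      ∀ n, H.relIndex (K n) ≠ 0 := by
  classical
  obtain ⟨e, he⟩ := exists_surjective_nat G
  refine ⟨fun n => H ⊔ Subgroup.closure ((Finset.range n).image e : Set G), fun m n hmn => ?_,
    by simp, fun x => ?_, fun n => hH _⟩
  · refine sup_le_sup_left (Subgroup.closure_mono ?_) H
    exact Finset.coe_subset.mpr (Finset.image_subset_image (Finset.range_subset_range.mpr hmn))
  · obtain ⟨i, rfl⟩ := he x
    refine ⟨i + 1, Subgroup.mem_sup_right (Subgroup.subset_closure ?_)⟩
    simpa using ⟨i, le_rfl, rfl⟩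

theorem exists_transversal_mem_subsemigroup {H K : Subgroup G} {S : Subsemigroup G}
    (hSH : ∀ g : G, ∃ s ∈ S, ∃ h ∈ H, g = s * h) (hHK : H ≤ K) :
    ∃ t : G ⧸ K → G, (∀ c, (t c : G ⧸ K) = c) ∧ t ((1 : G) : G ⧸ K) = 1 ∧
      ∀ c, c ≠ ((1 : G) : G ⧸ K) → t c ∈ S := by
  classical
  choose f hfS h hh hf using hSH
  have hmk : ∀ g, (f g : G ⧸ K) = g := fun g =>
    QuotientGroup.eq.mpr ((inv_mul_eq_iff_eq_mul.mpr (hf g)).symm ▸ hHK (hh g))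
  refine ⟨fun c => if c = ((1 : G) : G ⧸ K) then 1 else f c.out, fun c => ?_, by simp,
    fun c hc => by simpa [hc] using hfS c.out⟩
  dsimp only
  split_ifs with hc
  · exact hc.symm
  · rw [hmk, QuotientGroup.out_eq']

theorem Subgroup.finite_image_of_relIndex_ne_zero {X : Type*} {H K : Subgroup G} {f : G → X}
    (hf : ∀ x, ∀ h ∈ H, f (x * h) = f x) (hHK : H.relIndex K ≠ 0) :
    (f '' (K : Set G)).Finite := by
  have : (H.subgroupOf K).FiniteIndex := ⟨hHK⟩
  refine (finite_range fun q : K ⧸ H.subgroupOf K => f q.out).subset ?_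
  rintro _ ⟨x, hx, rfl⟩
  obtain ⟨h, hh⟩ := QuotientGroup.mk_out_eq_mul (H.subgroupOf K) (⟨x, hx⟩ : K)
  exact ⟨(⟨x, hx⟩ : K), by simpa [hh] using hf x h h.2⟩

section NormalForm

variable (K : ℕ → Subgroup G) (t : (n : ℕ) → G ⧸ K n → G) (σ : G)

def normalForm : ℕ → G → G
  | 0, _ => σ
  | n + 1, x => t n x * normalForm n ((t n x)⁻¹ * x)

/-- The eventual value of `normalForm K t σ n x` as `n → ∞`. -/
noncomputable def stableNormalForm (hcov : ∀ x, ∃ n, x ∈ K n) (x : G) : G :=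
  normalForm K t σ (hcov x).choose x

variable {K t σ} {hcov : ∀ x, ∃ n, x ∈ K n}

theorem normalForm_mem {S : Subsemigroup G} (hσ : σ ∈ S)
    (ht1 : ∀ n, t n ((1 : G) : G ⧸ K n) = 1)
    (htS : ∀ n c, c ≠ ((1 : G) : G ⧸ K n) → t n c ∈ S) :
    ∀ n x, normalForm K t σ n x ∈ S
  | 0, _ => hσ
  | n + 1, x => by
    by_cases hx : (x : G ⧸ K n) = ((1 : G) : G ⧸ K n)
    · simpa [normalForm, hx, ht1] using normalForm_mem hσ ht1 htS n ((t n x)⁻¹ * x)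
    · exact S.mul_mem (htS n x hx) (normalForm_mem hσ ht1 htS n _)

theorem inv_normalForm_mul_mem {H : Subgroup G} (ht : ∀ n c, (t n c : G ⧸ K n) = c)
    (hσ : σ ∈ H) (hK0 : K 0 ≤ H) :
    ∀ n x, x ∈ K n → (normalForm K t σ n x)⁻¹ * x ∈ H
  | 0, x, hx => H.mul_mem (H.inv_mem hσ) (hK0 hx)
  | n + 1, x, _ => by
    have hx : (t n x)⁻¹ * x ∈ K n := QuotientGroup.eq.mp (ht n x)
    simpa [normalForm, mul_assoc] using inv_normalForm_mul_mem ht hσ hK0 n _ hx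

theorem normalForm_mul_of_mem {H : Subgroup G} (hHK : ∀ n, H ≤ K n) {h : G} (hh : h ∈ H) :
    ∀ n x, normalForm K t σ n (x * h) = normalForm K t σ n x
  | 0, _ => rfl
  | n + 1, x => by
    have hxh : t n (x * h : G) = t n x :=
      congrArg (t n) (QuotientGroup.eq.mpr (by simpa using hHK n hh)).symm
    simp only [normalForm, hxh, ← mul_assoc, normalForm_mul_of_mem hHK hh n]

theorem normalForm_succ_of_mem (ht1 : ∀ n, t n ((1 : G) : G ⧸ K n) = 1) {n : ℕ} {x : G}
    (hx : x ∈ K n) : normalForm K t σ (n + 1) x = normalForm K t σ n x := by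
  have : (x : G ⧸ K n) = ((1 : G) : G ⧸ K n) := QuotientGroup.eq.mpr (by simpa using hx)
  simp [normalForm, this, ht1]

theorem normalForm_eq_of_le (ht1 : ∀ n, t n ((1 : G) : G ⧸ K n) = 1) (hK : Monotone K)
    {m n : ℕ} (hmn : m ≤ n) {x : G} (hx : x ∈ K m) :
    normalForm K t σ n x = normalForm K t σ m x := by
  induction n, hmn using Nat.le_induction with
  | base => rfl
  | succ n hmn ih => rw [normalForm_succ_of_mem ht1 (hK hmn hx), ih]

/-- Right multiplication by `K m` leaves the first `n - m` factors of the normal form alone. -/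
theorem exists_normalForm_mul_eq (ht : ∀ n c, (t n c : G ⧸ K n) = c) (hK : Monotone K)
    {m n : ℕ} (hmn : m ≤ n) {x : G} (hx : x ∈ K n) : ∃ r, r⁻¹ * x ∈ K m ∧
      ∀ b ∈ K m, normalForm K t σ n (x * b) = r * normalForm K t σ m (r⁻¹ * (x * b)) := by
  induction n, hmn using Nat.le_induction generalizing x with
  | base => exact ⟨1, by simpa using hx, fun b _ => by simp⟩
  | succ n hmn ih =>
    set p := t n x
    obtain ⟨r, hr, hrb⟩ := ih (QuotientGroup.eq.mp (ht n x))
    refine ⟨p * r, by simpa [mul_assoc] using hr, fun b hb => ?_⟩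
    have hpb : t n (x * b : G) = p :=
      congrArg (t n) (QuotientGroup.eq.mpr (by simpa using hK hmn hb)).symm
    rw [normalForm, hpb, ← mul_assoc, hrb b hb]
    simp only [p, mul_inv_rev, mul_assoc]

theorem stableNormalForm_eq (ht1 : ∀ n, t n ((1 : G) : G ⧸ K n) = 1) (hK : Monotone K)
    {n : ℕ} {x : G} (hx : x ∈ K n) : stableNormalForm K t σ hcov x = normalForm K t σ n x :=
  (le_total (hcov x).choose n).elim
    (fun h => (normalForm_eq_of_le ht1 hK h (hcov x).choose_spec).symm)
    (fun h => normalForm_eq_of_le ht1 hK h hx)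

theorem stableNormalForm_mul_of_mem {H : Subgroup G} (ht1 : ∀ n, t n ((1 : G) : G ⧸ K n) = 1)
    (hK : Monotone K) (hHK : ∀ n, H ≤ K n) (x : G) {h : G} (hh : h ∈ H) :
    stableNormalForm K t σ hcov (x * h) = stableNormalForm K t σ hcov x := by
  obtain ⟨n, hx⟩ := hcov x
  rw [stableNormalForm_eq ht1 hK hx, stableNormalForm_eq ht1 hK ((K n).mul_mem hx (hHK n hh)),
    normalForm_mul_of_mem hHK hh]

theorem finite_range_inv_stableNormalForm_mul {H : Subgroup G}
    (ht : ∀ n c, (t n c : G ⧸ K n) = c) (ht1 : ∀ n, t n ((1 : G) : G ⧸ K n) = 1)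
    (hK : Monotone K) (hHK : ∀ n, H ≤ K n) (hfin : ∀ n, H.relIndex (K n) ≠ 0) (d : G) :
    (range fun x =>
      (stableNormalForm K t σ hcov x)⁻¹ * stableNormalForm K t σ hcov (x * d)).Finite := by
  obtain ⟨m, hd⟩ := hcov d
  have hfinm : (normalForm K t σ m '' K m).Finite :=
    Subgroup.finite_image_of_relIndex_ne_zero
      (fun x _ hh => normalForm_mul_of_mem hHK hh m x) (hfin m)
  refine (hfinm.inv.mul hfinm).subset ?_
  rintro _ ⟨x, rfl⟩
  obtain ⟨n, hx⟩ := hcov x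
  have hxn : x ∈ K (max m n) := hK (le_max_right m n) hx
  have hxd : x * d ∈ K (max m n) := (K _).mul_mem hxn (hK (le_max_left m n) hd)
  obtain ⟨r, hr, hrb⟩ := exists_normalForm_mul_eq (σ := σ) ht hK (le_max_left m n) hxn
  have hrx : normalForm K t σ (max m n) x = r * normalForm K t σ m (r⁻¹ * x) := by
    simpa using hrb 1 (K m).one_mem
  dsimp only
  rw [stableNormalForm_eq ht1 hK hxn, stableNormalForm_eq ht1 hK hxd, hrx, hrb d hd,
    ← mul_assoc r⁻¹]
  simpa [mul_assoc] using Set.mul_mem_mul (Set.inv_mem_inv.mpr (mem_image_of_mem _ hr))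
    (mem_image_of_mem (normalForm K t σ m) ((K m).mul_mem hr hd))

end NormalForm

theorem exists_section_mem_subsemigroup_of_filtration {H : Subgroup G} {S : Subsemigroup G}
    {K : ℕ → Subgroup G} (hK : Monotone K) (hK0 : K 0 = H) (hcov : ∀ x, ∃ n, x ∈ K n)
    (hfin : ∀ n, H.relIndex (K n) ≠ 0) (hSH : ∀ g : G, ∃ s ∈ S, ∃ h ∈ H, g = s * h) :
    ∃ s : G ⧸ H → G, (∀ u, (s u : G ⧸ H) = u) ∧ (∀ u, s u ∈ S) ∧
      ∀ d : G, (range fun x : G => (s x)⁻¹ * s (x * d : G)).Finite := by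
  have hHK : ∀ n, H ≤ K n := fun n => hK0 ▸ hK n.zero_le
  choose t ht ht1 htS using fun n => exists_transversal_mem_subsemigroup hSH (hHK n)
  obtain ⟨σ, hσS, h, hh, h1⟩ := hSH 1
  have hσH : σ ∈ H := eq_inv_of_mul_eq_one_left h1.symm ▸ H.inv_mem hh
  refine ⟨fun u => u.liftOn' (stableNormalForm K t σ hcov) fun a b hab => ?_, fun u => ?_,
    fun u => ?_, finite_range_inv_stableNormalForm_mul ht ht1 hK hHK hfin⟩
  · rw [← stableNormalForm_mul_of_mem ht1 hK hHK a (QuotientGroup.leftRel_apply.mp hab),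
      mul_inv_cancel_left]
  · induction u using QuotientGroup.induction_on with | H x =>
    obtain ⟨n, hx⟩ := hcov x
    refine QuotientGroup.eq.mpr ?_
    change (stableNormalForm K t σ hcov x)⁻¹ * x ∈ H
    rw [stableNormalForm_eq ht1 hK hx]
    exact inv_normalForm_mul_mem ht hσH hK0.le n x hx
  · induction u using QuotientGroup.induction_on with | H x =>
    exact normalForm_mem hσS ht1 htS _ x

theorem exists_dist_le_of_finite_range_inv_mul [PseudoMetricSpace G]
    {H : Subgroup G} (hinv : ∀ g x y : G, dist (g * x) (g * y) = dist x y)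
    {dq : G ⧸ H → G ⧸ H → ℝ}
    (hdqinv : ∀ (g : G) (u v : G ⧸ H), dq (g • u) (g • v) = dq u v)
    (hdqprop : ∀ (u : G ⧸ H) (r : ℝ), {v : G ⧸ H | dq u v ≤ r}.Finite) {s : G ⧸ H → G}
    (hs : ∀ u, (s u : G ⧸ H) = u)
    (hfin : ∀ d : G, (range fun x : G => (s x)⁻¹ * s (x * d : G)).Finite)
    (δ : ℝ) : ∃ ε, 0 ≤ ε ∧ ∀ u v, dq u v ≤ δ → dist (s u) (s v) ≤ ε := by
  set B := {w : G ⧸ H | dq ((1 : G) : G ⧸ H) w ≤ δ}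
  have hF : (⋃ w ∈ B, range fun x : G => (s x)⁻¹ * s (x * w.out : G)).Finite :=
    (hdqprop _ δ).biUnion fun w _ => hfin w.out
  obtain ⟨ε, hε⟩ := (hF.image (dist 1)).bddAbove
  refine ⟨max ε 0, le_max_right _ _, fun u v huv => ?_⟩
  have hu : (s u)⁻¹ • u = ((1 : G) : G ⧸ H) := by
    nth_rw 2 [← hs u]
    rw [MulAction.Quotient.smul_mk, smul_eq_mul, inv_mul_cancel]
  have hw : (s u)⁻¹ • v ∈ B := by
    show dq _ _ ≤ δ
    rwa [← hu, hdqinv]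
  have hv : ((s u * ((s u)⁻¹ • v).out : G) : G ⧸ H) = v := by
    rw [← smul_eq_mul, ← MulAction.Quotient.smul_mk, QuotientGroup.out_eq', smul_inv_smul]
  calc dist (s u) (s v)
      = dist 1 ((s (s u))⁻¹ * s (s u * ((s u)⁻¹ • v).out : G)) := by
        rw [hs u, hv, ← hinv (s u)⁻¹, inv_mul_cancel]
    _ ≤ ε := hε (mem_image_of_mem _ (mem_biUnion hw ⟨s u, rfl⟩))
    _ ≤ max ε 0 := le_max_left _ _

end

theorem exists_bornologous_section_into_subsemigroup_general
    (G : Type) [Group G] [Countable G] [MetricSpace G] (H : Subgroup G)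
    (hinv : ∀ g x y : G, dist (g * x) (g * y) = dist x y)
    (hH : LocallyFiniteIndex H)
    (dq : G ⧸ H → G ⧸ H → ℝ)
    (hdqinv : ∀ (g : G) (u v : G ⧸ H), dq (g • u) (g • v) = dq u v)
    (hdqprop : ∀ (u : G ⧸ H) (r : ℝ), {v : G ⧸ H | dq u v ≤ r}.Finite)
    (S : Subsemigroup G) (hSH : ∀ g : G, ∃ s ∈ S, ∃ h ∈ H, g = s * h) :
    ∃ s : G ⧸ H → G, (∀ u : G ⧸ H, (QuotientGroup.mk (s u) : G ⧸ H) = u) ∧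
      (∀ u : G ⧸ H, s u ∈ S) ∧
      (∀ δ : ℝ, 0 ≤ δ → ∃ ε : ℝ, 0 ≤ ε ∧
        ∀ u v : G ⧸ H, dq u v ≤ δ → dist (s u) (s v) ≤ ε) := by
  obtain ⟨K, hK, hK0, hcov, hfin⟩ := exists_filtration_of_locallyFiniteIndex hH
  obtain ⟨s, hs, hsS, hsfin⟩ :=
    exists_section_mem_subsemigroup_of_filtration hK hK0 hcov hfin hSH
  exact ⟨s, hs, hsS, fun δ _ =>
    exists_dist_le_of_finite_range_inv_mul hinv hdqinv hdqprop hs hsfin δ⟩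

/-- Let `H` be a subgroup of locally finite index in a countable group `G`, where `G`
carries a proper left-invariant metric and `G ⧸ H` a proper `G`-invariant metric `dq`.
For every subsemigroup `S` of `G` with `S·H = G`, the quotient map `q : G → G ⧸ H` has a
bornologous section `s : G ⧸ H → G` taking values in `S`. -/
theorem exists_bornologous_section_into_subsemigroup
    (G : Type) [Group G] [Countable G] [MetricSpace G] (H : Subgroup G)
    (hinv : ∀ g x y : G, dist (g * x) (g * y) = dist x y)
    (hprop : ∀ (x : G) (r : ℝ), {y : G | dist x y ≤ r}.Finite)
    (hH : LocallyFiniteIndex H)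
    (dq : G ⧸ H → G ⧸ H → ℝ) (hdq : IsMetricFun dq)
    (hdqinv : ∀ (g : G) (u v : G ⧸ H), dq (g • u) (g • v) = dq u v)
    (hdqprop : ∀ (u : G ⧸ H) (r : ℝ), {v : G ⧸ H | dq u v ≤ r}.Finite)
    (S : Subsemigroup G) (hSH : ∀ g : G, ∃ s ∈ S, ∃ h ∈ H, g = s * h) :
    ∃ s : G ⧸ H → G, (∀ u : G ⧸ H, (QuotientGroup.mk (s u) : G ⧸ H) = u) ∧
      (∀ u : G ⧸ H, s u ∈ S) ∧
      (∀ δ : ℝ, 0 ≤ δ → ∃ ε : ℝ, 0 ≤ ε ∧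
        ∀ u v : G ⧸ H, dq u v ≤ δ → dist (s u) (s v) ≤ ε) :=
  exists_bornologous_section_into_subsemigroup_general G H hinv hH dq hdqinv hdqprop S hSH
end

section
/- Let G be a countable group endowed with a proper left-invariant metric and let A, B be subsets of G. The multiplication map A × B → G, (a,b) ↦ ab, where A × B carries the max-metric, is bornologous if and only if A⁻¹A ⊆ Q(B), where Q(B) = {x ∈ G : {b⁻¹xb : b ∈ B} is finite} is the quasi-centralizer of B in G. -/
open Pointwise

/-- The quasi-centralizer of a subset `A` of a group `G`:
the set of `x ∈ G` whose `A`-conjugacy class `{a⁻¹xa : a ∈ A}` is finite. -/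
def quasiCentralizer {G : Type*} [Group G] (A : Set G) : Set G :=
  {x : G | ((fun a => a⁻¹ * x * a) '' A).Finite}

/-- For subsets `A`, `B` of a countable group `G` with a proper left-invariant metric,
the multiplication map `A × B → G` (with the max-metric on the product) is bornologous
iff `A⁻¹A ⊆ Q(B)`. -/
theorem multiplication_bornologous_iff_subset_quasiCentralizer
    (G : Type) [Group G] [Countable G] [MetricSpace G]
    (hinv : ∀ g x y : G, dist (g * x) (g * y) = dist x y)
    (hprop : ∀ (x : G) (r : ℝ), {y : G | dist x y ≤ r}.Finite)
    (A B : Set G) :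
    (∀ δ : ℝ, 0 ≤ δ → ∃ ε : ℝ, 0 ≤ ε ∧
      ∀ a ∈ A, ∀ a' ∈ A, ∀ b ∈ B, ∀ b' ∈ B,
        max (dist a a') (dist b b') ≤ δ → dist (a * b) (a' * b') ≤ ε) ↔
    A⁻¹ * A ⊆ quasiCentralizer B := by
  constructor
  · intro h x hx
    rw [Set.mem_mul] at hx
    obtain ⟨u, hu, a', ha', rfl⟩ := hx
    rw [Set.mem_inv] at hu
    obtain ⟨ε, hε0, hε⟩ := h (dist u⁻¹ a') dist_nonneg
    apply (hprop 1 ε).subset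
    rintro _ ⟨b, hb, rfl⟩
    have h1 := hε u⁻¹ hu a' ha' b hb b hb (by simp [dist_nonneg])
    have h2 : dist 1 (b⁻¹ * (u * a') * b) = dist (u⁻¹ * b) (a' * b) := by
      have := hinv (u⁻¹ * b) 1 (b⁻¹ * (u * a') * b)
      rw [mul_one] at this
      rw [← this]
      congr 1
      group
    simp only [Set.mem_setOf_eq]
    rw [h2]; exact h1
  · intro h δ hδ
    set S := {y : G | dist 1 y ≤ δ} ∩ (A⁻¹ * A) with hS
    have hSfin : S.Finite := ((hprop 1 δ).inter_of_left _)
    have hTfin : (⋃ x ∈ S, ((fun b => b⁻¹ * x * b) '' B)).Finite :=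
      hSfin.biUnion (fun x hx => h hx.2)
    obtain ⟨C, hC⟩ := (hTfin.image (dist 1)).bddAbove
    refine ⟨δ + max C 0, by positivity, ?_⟩
    intro a ha a' ha' b hb b' hb' hmax
    have hxmem : a⁻¹ * a' ∈ A⁻¹ * A := Set.mul_mem_mul (Set.inv_mem_inv.mpr ha) ha'
    have hd1 : dist 1 (a⁻¹ * a') ≤ δ := by
      have := hinv a 1 (a⁻¹ * a')
      rw [mul_one, mul_inv_cancel_left] at this
      rw [← this]
      exact le_trans (le_max_left _ _) hmax
    have hT : (b'⁻¹ * (a⁻¹ * a') * b') ∈ ⋃ x ∈ S, ((fun b => b⁻¹ * x * b) '' B) :=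
      Set.mem_biUnion ⟨hd1, hxmem⟩ ⟨b', hb', rfl⟩
    have hdC : dist 1 (b'⁻¹ * (a⁻¹ * a') * b') ≤ C :=
      hC (Set.mem_image_of_mem _ hT)
    have step1 : dist (a * b) (a * b') = dist b b' := hinv a b b'
    have step2 : dist (a * b') (a' * b') = dist 1 (b'⁻¹ * (a⁻¹ * a') * b') := by
      have := hinv (a * b') 1 (b'⁻¹ * (a⁻¹ * a') * b')
      rw [mul_one] at this
      rw [← this]
      congr 1
      group
    calc dist (a * b) (a' * b')
        ≤ dist (a * b) (a * b') + dist (a * b') (a' * b') := dist_triangle _ _ _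
      _ = dist b b' + dist 1 (b'⁻¹ * (a⁻¹ * a') * b') := by rw [step1, step2]
      _ ≤ δ + max C 0 :=
          add_le_add (le_trans (le_max_right _ _) hmax) (le_trans hdC (le_max_left _ _))
end

section
/- Let H be a quasi-normal subgroup of a countable group G; endow G with a proper left-invariant metric, G/H with a proper G-invariant metric, H with the metric induced from G, and H × (G/H) with the max-metric. If the quotient map q : G → G/H has a bornologous section s : G/H → G with s(G/H) ⊆ Q(H), then the map f : H × (G/H) → G, f(x, yH) = s(yH)·x, is a bijection such that both f and f⁻¹ are bornologous; in particular G is bijectively coarsely equivalent to H × (G/H). -/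
lemma inv_mul_mem_qC {G : Type*} [Group G] {A : Set G} {a b : G}
    (ha : a ∈ quasiCentralizer A) (hb : b ∈ quasiCentralizer A) :
    a⁻¹ * b ∈ quasiCentralizer A := by
  refine Set.Finite.subset (Set.Finite.image2 (fun x y => x⁻¹ * y) ha hb) ?_
  rintro _ ⟨c, hc, rfl⟩
  exact ⟨c⁻¹ * a * c, ⟨c, hc, rfl⟩, c⁻¹ * b * c, ⟨c, hc, rfl⟩, by group⟩

/-- Uniform bound on distances of conjugates (by elements of `H`) of
quasi-centralizing elements in a ball. -/
lemma conj_bound {G : Type*} [Group G] [MetricSpace G] (H : Subgroup G)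
    (hprop : ∀ (x : G) (r : ℝ), {y : G | dist x y ≤ r}.Finite) (R : ℝ) :
    ∃ M : ℝ, 0 ≤ M ∧ ∀ w : G, dist (1 : G) w ≤ R → w ∈ quasiCentralizer (H : Set G) →
      ∀ x : G, x ∈ H → dist (1 : G) (x⁻¹ * w * x) ≤ M := by
  set B : Set G := {w | dist (1 : G) w ≤ R} ∩ quasiCentralizer (H : Set G) with hBdef
  have hB : B.Finite := (hprop 1 R).subset Set.inter_subset_left
  have hT : (⋃ w ∈ B, (fun a => a⁻¹ * w * a) '' (H : Set G)).Finite :=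
    hB.biUnion fun w hw => hw.2
  obtain ⟨M', hM'⟩ := (hT.image (dist (1 : G))).bddAbove
  refine ⟨max M' 0, le_max_right _ _, fun w hw hwQ x hx => ?_⟩
  have hmem : x⁻¹ * w * x ∈ ⋃ w ∈ B, (fun a => a⁻¹ * w * a) '' (H : Set G) :=
    Set.mem_biUnion (⟨hw, hwQ⟩ : w ∈ B) ⟨x, hx, rfl⟩
  exact le_trans (hM' (Set.mem_image_of_mem _ hmem)) (le_max_left _ _)

/-- Let `H` be a quasi-normal subgroup of a countable group `G` with a proper
left-invariant metric, and let `dq` be a proper `G`-invariant metric on `G ⧸ H`.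
If the quotient map `q : G → G ⧸ H` has a bornologous section `s` with values in `Q(H)`,
then `f : H × (G ⧸ H) → G`, `f(x, u) = s(u)·x`, is a bijection that is bornologous in
both directions with respect to the max-metric on `H × (G ⧸ H)` (where `H` carries the
metric induced from `G`); in particular `G` is bijectively coarsely equivalent to
`H × (G ⧸ H)`. -/
theorem bijective_coarse_equiv_of_section_into_quasiCentralizer
    (G : Type) [Group G] [Countable G] [MetricSpace G] (H : Subgroup G)
    (hinv : ∀ g x y : G, dist (g * x) (g * y) = dist x y)
    (hprop : ∀ (x : G) (r : ℝ), {y : G | dist x y ≤ r}.Finite)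
    (hqn : QuasiNormal H)
    (dq : G ⧸ H → G ⧸ H → ℝ) (hdq : IsMetricFun dq)
    (hdqinv : ∀ (g : G) (u v : G ⧸ H), dq (g • u) (g • v) = dq u v)
    (hdqprop : ∀ (u : G ⧸ H) (r : ℝ), {v : G ⧸ H | dq u v ≤ r}.Finite)
    (s : G ⧸ H → G)
    (hsec : ∀ u : G ⧸ H, (QuotientGroup.mk (s u) : G ⧸ H) = u)
    (hsQ : ∀ u : G ⧸ H, s u ∈ quasiCentralizer (H : Set G))
    (hsborn : ∀ δ : ℝ, 0 ≤ δ → ∃ ε : ℝ, 0 ≤ ε ∧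
      ∀ u v : G ⧸ H, dq u v ≤ δ → dist (s u) (s v) ≤ ε) :
    Function.Bijective (fun p : H × (G ⧸ H) => s p.2 * (p.1 : G)) ∧
    (∀ δ : ℝ, 0 ≤ δ → ∃ ε : ℝ, 0 ≤ ε ∧
      ∀ p q : H × (G ⧸ H), max (dist (p.1 : G) (q.1 : G)) (dq p.2 q.2) ≤ δ →
        dist (s p.2 * (p.1 : G)) (s q.2 * (q.1 : G)) ≤ ε) ∧
    (∀ δ : ℝ, 0 ≤ δ → ∃ ε : ℝ, 0 ≤ ε ∧
      ∀ p q : H × (G ⧸ H), dist (s p.2 * (p.1 : G)) (s q.2 * (q.1 : G)) ≤ δ →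
        max (dist (p.1 : G) (q.1 : G)) (dq p.2 q.2) ≤ ε) := by
  -- auxiliary facts
  have hmk : ∀ (a : G) (x : H), (QuotientGroup.mk (a * (x : G)) : G ⧸ H) = QuotientGroup.mk a :=
    fun a x => QuotientGroup.mk_mul_of_mem a x.2
  -- a `dist 1` version of left invariance
  have hinv1 : ∀ a b : G, dist a b = dist (1 : G) (a⁻¹ * b) := by
    intro a b
    have := hinv a⁻¹ a b
    simpa using this.symm
  refine ⟨⟨?_, ?_⟩, ?_, ?_⟩
  · -- injective
    rintro ⟨x, u⟩ ⟨y, v⟩ h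
    simp only at h
    have huv : u = v := by
      have h1 := hmk (s u) x
      have h2 := hmk (s v) y
      rw [hsec] at h1 h2
      rw [← h1, ← h2, h]
    subst huv
    have : (x : G) = y := mul_left_cancel h
    exact Prod.ext (Subtype.ext this) rfl
  · -- surjective
    intro g
    have hmem : (s (QuotientGroup.mk g))⁻¹ * g ∈ H := by
      have := hsec (QuotientGroup.mk g : G ⧸ H)
      exact (QuotientGroup.eq).mp this
    refine ⟨⟨⟨_, hmem⟩, QuotientGroup.mk g⟩, ?_⟩
    simp
  · -- forward bornologous
    intro δ hδ
    obtain ⟨ε₀, hε₀, hs₀⟩ := hsborn δ hδ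
    obtain ⟨M, hM0, hM⟩ := conj_bound H hprop ε₀
    refine ⟨M + δ, by linarith, ?_⟩
    rintro ⟨x, u⟩ ⟨y, v⟩ hmax
    simp only [max_le_iff] at hmax
    obtain ⟨hxy, huv⟩ := hmax
    have hsd : dist (s u) (s v) ≤ ε₀ := hs₀ u v huv
    have h1 : dist (s u * (x : G)) (s v * (x : G)) ≤ M := by
      rw [hinv1]
      have : (s u * (x : G))⁻¹ * (s v * (x : G)) = (x : G)⁻¹ * ((s u)⁻¹ * s v) * (x : G) := by
        group
      rw [this]
      refine hM _ ?_ (inv_mul_mem_qC (hsQ u) (hsQ v)) _ x.2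
      rw [← hinv1]; exact hsd
    have h2 : dist (s v * (x : G)) (s v * (y : G)) = dist (x : G) (y : G) := hinv _ _ _
    calc dist (s u * (x : G)) (s v * (y : G))
        ≤ dist (s u * (x : G)) (s v * (x : G)) + dist (s v * (x : G)) (s v * (y : G)) :=
          dist_triangle _ _ _
      _ ≤ M + δ := by rw [h2]; exact add_le_add h1 (le_trans hxy le_rfl)
  · -- backward bornologous
    intro δ hδ
    -- bound for the quotient map: dq (mk a) (mk b) ≤ ε₁ when dist a b ≤ δ
    have hball : ({c : G | dist (1 : G) c ≤ δ}).Finite := hprop 1 δ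
    obtain ⟨M₁, hM₁⟩ := (hball.image (fun c => dq (QuotientGroup.mk (1 : G)) (QuotientGroup.mk c))).bddAbove
    set ε₁ : ℝ := max M₁ 0 with hε₁def
    have hε₁0 : 0 ≤ ε₁ := le_max_right _ _
    have hq : ∀ a b : G, dist a b ≤ δ → dq (QuotientGroup.mk a) (QuotientGroup.mk b) ≤ ε₁ := by
      intro a b hab
      have hc : a⁻¹ * b ∈ {c : G | dist (1 : G) c ≤ δ} := by
        rw [Set.mem_setOf_eq, ← hinv1]; exact hab
      have hs : dq (QuotientGroup.mk a) (QuotientGroup.mk b)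
          = dq (QuotientGroup.mk (1 : G)) (QuotientGroup.mk (a⁻¹ * b)) := by
        have := hdqinv a (QuotientGroup.mk (1 : G)) (QuotientGroup.mk (a⁻¹ * b))
        have e1 : a • (QuotientGroup.mk (1 : G) : G ⧸ H) = QuotientGroup.mk a := by
          show (QuotientGroup.mk (a * 1) : G ⧸ H) = _
          rw [mul_one]
        have e2 : a • (QuotientGroup.mk (a⁻¹ * b) : G ⧸ H) = QuotientGroup.mk b := by
          show (QuotientGroup.mk (a * (a⁻¹ * b)) : G ⧸ H) = _
          rw [mul_inv_cancel_left]
        rw [e1, e2] at this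
        exact this
      rw [hs]
      exact le_trans (hM₁ (Set.mem_image_of_mem _ hc)) (le_max_left _ _)
    obtain ⟨ε₂, hε₂0, hs₂⟩ := hsborn ε₁ hε₁0
    obtain ⟨M₂, hM₂0, hM₂⟩ := conj_bound H hprop ε₂
    refine ⟨max (M₂ + δ) ε₁, le_trans hε₁0 (le_max_right _ _), ?_⟩
    rintro ⟨x, u⟩ ⟨y, v⟩ hd
    simp only at hd ⊢
    have hu : (QuotientGroup.mk (s u * (x : G)) : G ⧸ H) = u := by rw [hmk, hsec]
    have hv : (QuotientGroup.mk (s v * (y : G)) : G ⧸ H) = v := by rw [hmk, hsec]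
    have hquv : dq u v ≤ ε₁ := by
      rw [← hu, ← hv]; exact hq _ _ hd
    have hqvu : dq v u ≤ ε₁ := by rw [hdq.2.1]; exact hquv
    have hsd : dist (s v) (s u) ≤ ε₂ := hs₂ v u hqvu
    have h1 : dist (s v * (x : G)) (s u * (x : G)) ≤ M₂ := by
      rw [hinv1]
      have : (s v * (x : G))⁻¹ * (s u * (x : G)) = (x : G)⁻¹ * ((s v)⁻¹ * s u) * (x : G) := by
        group
      rw [this]
      refine hM₂ _ ?_ (inv_mul_mem_qC (hsQ v) (hsQ u)) _ x.2
      rw [← hinv1]; exact hsd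
    have hxy : dist (x : G) (y : G) ≤ M₂ + δ := by
      have := hinv (s v) (x : G) (y : G)
      rw [← this]
      calc dist (s v * (x : G)) (s v * (y : G))
          ≤ dist (s v * (x : G)) (s u * (x : G)) + dist (s u * (x : G)) (s v * (y : G)) :=
            dist_triangle _ _ _
        _ ≤ M₂ + δ := add_le_add h1 hd
    exact max_le (le_trans hxy (le_max_left _ _)) (le_trans hquv (le_max_right _ _))
end

section
/- Let H be a uniformly quasi-normal subgroup of a countable group G and let A ⊆ G satisfy A = A⁻¹ and Q(A) = G; endow G with a proper left-invariant metric, G/H with a proper G-invariant metric, H with the metric induced from G, and H × (G/H) with the max-metric. If the quotient map q : G → G/H has a bornologous section s : G/H → G with s(G/H) ⊆ A, then the map f : H × (G/H) → G, f(x,y) = x·s(y)⁻¹, is a bijection such that both f and f⁻¹ are bornologous; in particular G is bijectively coarsely equivalent to H × (G/H). -/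
open Pointwise

/-- A subgroup `H` of a group `G` is uniformly quasi-normal: there is a finite set
`F ⊆ G` with `x⁻¹Hx ⊆ F·H` for every `x ∈ G`. -/
def UniformlyQuasiNormal {G : Type*} [Group G] (H : Subgroup G) : Prop :=
  ∃ F : Finset G, ∀ x : G, ∀ h ∈ H, ∃ f ∈ F, ∃ h' ∈ H, x⁻¹ * h * x = f * h'

/-- Let `H` be a uniformly quasi-normal subgroup of a countable group `G` with a proper
left-invariant metric, let `A ⊆ G` satisfy `A = A⁻¹` and `Q(A) = G`, and let `dq` be a
proper `G`-invariant metric on `G ⧸ H`.  If the quotient map `q : G → G ⧸ H` has a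
bornologous section `s` with values in `A`, then `f : H × (G ⧸ H) → G`,
`f(x, y) = x·s(y)⁻¹`, is a bijection that is bornologous in both directions with respect
to the max-metric on `H × (G ⧸ H)` (where `H` carries the metric induced from `G`);
in particular `G` is bijectively coarsely equivalent to `H × (G ⧸ H)`. -/
theorem bijective_coarse_equiv_of_section_into_symmetric_set
    (G : Type) [Group G] [Countable G] [MetricSpace G] (H : Subgroup G)
    (hinv : ∀ g x y : G, dist (g * x) (g * y) = dist x y)
    (hprop : ∀ (x : G) (r : ℝ), {y : G | dist x y ≤ r}.Finite)
    (huqn : UniformlyQuasiNormal H)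
    (A : Set G) (hAsymm : A = A⁻¹) (hQA : quasiCentralizer A = Set.univ)
    (dq : G ⧸ H → G ⧸ H → ℝ) (hdq : IsMetricFun dq)
    (hdqinv : ∀ (g : G) (u v : G ⧸ H), dq (g • u) (g • v) = dq u v)
    (hdqprop : ∀ (u : G ⧸ H) (r : ℝ), {v : G ⧸ H | dq u v ≤ r}.Finite)
    (s : G ⧸ H → G)
    (hsec : ∀ u : G ⧸ H, (QuotientGroup.mk (s u) : G ⧸ H) = u)
    (hsA : ∀ u : G ⧸ H, s u ∈ A)
    (hsborn : ∀ δ : ℝ, 0 ≤ δ → ∃ ε : ℝ, 0 ≤ ε ∧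
      ∀ u v : G ⧸ H, dq u v ≤ δ → dist (s u) (s v) ≤ ε) :
    Function.Bijective (fun p : H × (G ⧸ H) => (p.1 : G) * (s p.2)⁻¹) ∧
    (∀ δ : ℝ, 0 ≤ δ → ∃ ε : ℝ, 0 ≤ ε ∧
      ∀ p q : H × (G ⧸ H), max (dist (p.1 : G) (q.1 : G)) (dq p.2 q.2) ≤ δ →
        dist ((p.1 : G) * (s p.2)⁻¹) ((q.1 : G) * (s q.2)⁻¹) ≤ ε) ∧
    (∀ δ : ℝ, 0 ≤ δ → ∃ ε : ℝ, 0 ≤ ε ∧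
      ∀ p q : H × (G ⧸ H), dist ((p.1 : G) * (s p.2)⁻¹) ((q.1 : G) * (s q.2)⁻¹) ≤ δ →
        max (dist (p.1 : G) (q.1 : G)) (dq p.2 q.2) ≤ ε) := by
  -- `dist` in terms of distance to the identity
  have dist_eq : ∀ a b : G, dist a b = dist 1 (a⁻¹ * b) := by
    intro a b
    simpa using (hinv a⁻¹ a b).symm
  -- A is closed under inverses
  have hAinv : ∀ a ∈ A, a⁻¹ ∈ A := by
    intro a ha
    rw [hAsymm]
    simpa using ha
  -- key bounding lemma
  have bound : ∀ (S : Set G), S.Finite → ∀ φ : G → ℝ,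
      ∃ M : ℝ, 0 ≤ M ∧ ∀ c ∈ S, ∀ a ∈ A, φ (a⁻¹ * c * a) ≤ M := by
    intro S hS φ
    have hT : (⋃ c ∈ S, (fun a => a⁻¹ * c * a) '' A).Finite := by
      refine hS.biUnion ?_
      intro c _
      have hc : c ∈ quasiCentralizer A := by rw [hQA]; trivial
      exact hc
    obtain ⟨M, hM⟩ := (hT.image φ).bddAbove
    refine ⟨max M 0, le_max_right _ _, ?_⟩
    intro c hc a ha
    have hmem : φ (a⁻¹ * c * a) ∈ φ '' (⋃ c ∈ S, (fun a => a⁻¹ * c * a) '' A) :=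
      ⟨_, Set.mem_biUnion hc ⟨a, ha, rfl⟩, rfl⟩
    exact le_trans (hM hmem) (le_max_left _ _)
  refine ⟨⟨?_, ?_⟩, ?_, ?_⟩
  · -- injective
    rintro ⟨x, y⟩ ⟨x', y'⟩ h
    have h' : (x : G) * (s y)⁻¹ = (x' : G) * (s y')⁻¹ := h
    have h1 : (x' : G)⁻¹ * (x : G) = (s y')⁻¹ * s y := by
      have := congrArg (fun g => (x' : G)⁻¹ * g * s y) h'
      simp only [mul_assoc, inv_mul_cancel, mul_one, inv_mul_cancel_left] at this
      simpa [mul_assoc] using this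
    have hmem : (s y')⁻¹ * s y ∈ H := by
      rw [← h1]; exact H.mul_mem (H.inv_mem x'.2) x.2
    have hyy : y' = y := by
      rw [← hsec y', ← hsec y]
      exact QuotientGroup.eq.mpr hmem
    subst hyy
    have hxx : (x : G) = (x' : G) := mul_right_cancel h'
    exact Prod.ext (Subtype.ext hxx) rfl
  · -- surjective
    intro g
    have hmem : g * s (QuotientGroup.mk g⁻¹ : G ⧸ H) ∈ H := by
      have h1 : (QuotientGroup.mk (1 : G) : G ⧸ H)
          = QuotientGroup.mk (g * s (QuotientGroup.mk g⁻¹ : G ⧸ H)) := by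
        have e : (QuotientGroup.mk (g * s (QuotientGroup.mk g⁻¹ : G ⧸ H)) : G ⧸ H)
            = g • (QuotientGroup.mk (s (QuotientGroup.mk g⁻¹ : G ⧸ H)) : G ⧸ H) := rfl
        have e2 : g • (QuotientGroup.mk g⁻¹ : G ⧸ H) = (QuotientGroup.mk (g * g⁻¹) : G ⧸ H) := rfl
        rw [e, hsec, e2, mul_inv_cancel]
      simpa using QuotientGroup.eq.mp h1
    refine ⟨⟨⟨g * s (QuotientGroup.mk g⁻¹ : G ⧸ H), hmem⟩, (QuotientGroup.mk g⁻¹ : G ⧸ H)⟩, ?_⟩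
    simp [mul_assoc]
  · -- f is bornologous
    intro δ hδ
    obtain ⟨ε₁, hε₁0, hε₁⟩ := hsborn δ hδ
    obtain ⟨M₁, hM₁0, hM₁⟩ := bound {c | dist 1 c ≤ δ} (hprop 1 δ) (dist 1)
    obtain ⟨M₂, hM₂0, hM₂⟩ := bound (Inv.inv '' {c | dist 1 c ≤ ε₁}) ((hprop 1 ε₁).image _)
      (dist 1)
    refine ⟨M₁ + M₂, by positivity, ?_⟩
    intro p q hpq
    rw [max_le_iff] at hpq
    obtain ⟨hx, hy⟩ := hpq
    have t1 : dist ((p.1 : G) * (s p.2)⁻¹) ((q.1 : G) * (s p.2)⁻¹) ≤ M₁ := by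
      have e : dist ((p.1 : G) * (s p.2)⁻¹) ((q.1 : G) * (s p.2)⁻¹)
          = dist 1 (((s p.2)⁻¹)⁻¹ * ((p.1 : G)⁻¹ * (q.1 : G)) * (s p.2)⁻¹) := by
        rw [dist_eq]; congr 1; group
      rw [e]
      refine hM₁ _ ?_ _ (hAinv _ (hsA p.2))
      show dist 1 ((p.1 : G)⁻¹ * (q.1 : G)) ≤ δ
      rw [← dist_eq]; exact hx
    have t2 : dist ((q.1 : G) * (s p.2)⁻¹) ((q.1 : G) * (s q.2)⁻¹) ≤ M₂ := by
      rw [hinv]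
      have e : dist ((s p.2)⁻¹ : G) ((s q.2)⁻¹)
          = dist 1 (((s p.2)⁻¹)⁻¹ * ((s p.2)⁻¹ * s q.2)⁻¹ * (s p.2)⁻¹) := by
        rw [dist_eq]; congr 1; group
      rw [e]
      refine hM₂ _ ⟨(s p.2)⁻¹ * s q.2, ?_, rfl⟩ _ (hAinv _ (hsA p.2))
      show dist 1 ((s p.2)⁻¹ * s q.2) ≤ ε₁
      rw [← dist_eq]; exact hε₁ p.2 q.2 hy
    calc dist ((p.1 : G) * (s p.2)⁻¹) ((q.1 : G) * (s q.2)⁻¹)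
        ≤ dist ((p.1 : G) * (s p.2)⁻¹) ((q.1 : G) * (s p.2)⁻¹)
          + dist ((q.1 : G) * (s p.2)⁻¹) ((q.1 : G) * (s q.2)⁻¹) := dist_triangle _ _ _
      _ ≤ M₁ + M₂ := add_le_add t1 t2
  · -- f⁻¹ is bornologous
    intro δ hδ
    obtain ⟨M₃, hM₃0, hM₃⟩ := bound {c | dist 1 c ≤ δ} (hprop 1 δ)
      (fun t => dq (QuotientGroup.mk (1 : G)) (QuotientGroup.mk t))
    obtain ⟨ε₂, hε₂0, hε₂⟩ := hsborn M₃ hM₃0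
    obtain ⟨M₄, hM₄0, hM₄⟩ := bound {c | dist 1 c ≤ δ} (hprop 1 δ) (dist 1)
    refine ⟨max (ε₂ + M₄) M₃, le_max_of_le_right hM₃0, ?_⟩
    intro p q hpq
    set g := (p.1 : G) * (s p.2)⁻¹ with hg
    set g' := (q.1 : G) * (s q.2)⁻¹ with hg'
    have hc : dist 1 (g⁻¹ * g') ≤ δ := by rw [← dist_eq]; exact hpq
    have hcsymm : dist 1 (g'⁻¹ * g) ≤ δ := by rw [← dist_eq, dist_comm]; exact hpq
    -- express `q.2` via `g'`
    have hg'inv : g'⁻¹ = s q.2 * (q.1 : G)⁻¹ := by rw [hg']; group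
    have hy' : (QuotientGroup.mk g'⁻¹ : G ⧸ H) = q.2 := by
      rw [hg'inv, QuotientGroup.mk_mul_of_mem _ (H.inv_mem q.1.2), hsec]
    have hgx : g * s p.2 = (p.1 : G) := by rw [hg]; group
    -- bound on dq
    have e0 : ((s p.2)⁻¹ • p.2 : G ⧸ H) = QuotientGroup.mk (1 : G) := by
      have h : (s p.2)⁻¹ • (QuotientGroup.mk (s p.2) : G ⧸ H) = (s p.2)⁻¹ • p.2 := by
        rw [hsec]
      rw [← h]
      show (QuotientGroup.mk ((s p.2)⁻¹ * s p.2) : G ⧸ H) = _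
      rw [inv_mul_cancel]
    have e1 : ((s p.2)⁻¹ • q.2 : G ⧸ H)
        = QuotientGroup.mk ((s p.2)⁻¹ * (g'⁻¹ * g) * s p.2) := by
      rw [← hy']
      show (QuotientGroup.mk ((s p.2)⁻¹ * g'⁻¹) : G ⧸ H) = _
      have e : (s p.2)⁻¹ * (g'⁻¹ * g) * s p.2 = ((s p.2)⁻¹ * g'⁻¹) * (g * s p.2) := by group
      rw [e, hgx, QuotientGroup.mk_mul_of_mem _ p.1.2]
    have key : dq p.2 q.2
        = dq (QuotientGroup.mk (1 : G)) (QuotientGroup.mk ((s p.2)⁻¹ * (g'⁻¹ * g) * s p.2)) := by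
      rw [← hdqinv ((s p.2)⁻¹) p.2 q.2, e0, e1]
    have hdqyy : dq p.2 q.2 ≤ M₃ := by
      rw [key]
      exact hM₃ _ hcsymm _ (hsA p.2)
    -- bound on dist
    have hxg : (p.1 : G) = g * s p.2 := hgx.symm
    have hxg' : (q.1 : G) = g' * s q.2 := by rw [hg']; group
    have t1 : dist (g * s p.2) (g * s q.2) ≤ ε₂ := by
      rw [hinv]; exact hε₂ p.2 q.2 hdqyy
    have t2 : dist (g * s q.2) (g' * s q.2) ≤ M₄ := by
      have e : dist (g * s q.2) (g' * s q.2)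
          = dist 1 ((s q.2)⁻¹ * (g⁻¹ * g') * s q.2) := by
        rw [dist_eq]; congr 1; group
      rw [e]
      exact hM₄ _ hc _ (hsA q.2)
    have hdist : dist (p.1 : G) (q.1 : G) ≤ ε₂ + M₄ := by
      rw [hxg, hxg']
      calc dist (g * s p.2) (g' * s q.2)
          ≤ dist (g * s p.2) (g * s q.2) + dist (g * s q.2) (g' * s q.2) := dist_triangle _ _ _
        _ ≤ ε₂ + M₄ := add_le_add t1 t2
    exact max_le_max hdist hdqyy
end

section
/- The center of a finitely generated finite-by-abelian group has finite index in the group. -/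
theorem FiniteByAbelian.finite_commutatorSet {G : Type*} [Group G] (hG : FiniteByAbelian G) :
    Finite (commutatorSet G) := by
  obtain ⟨N, -, hN, hcomm⟩ := hG
  refine Set.Finite.subset (Set.toFinite (N : Set G)) ?_
  rintro _ ⟨a, b, rfl⟩
  exact hcomm a b

/-- The center of a finitely generated finite-by-abelian group has finite index. -/
theorem center_finiteIndex_of_fg_finiteByAbelian
    (G : Type) [Group G] (hfg : Group.FG G) (hG : FiniteByAbelian G) :
    (Subgroup.center G).FiniteIndex :=
  have := hG.finite_commutatorSet
  Subgroup.finiteIndex_center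
end

section
/- A finitely generated group is finite-by-abelian if and only if it is both abelian-by-finite and finite-by-nilpotent. -/
/-- A group is finite-by-nilpotent: it has a finite normal subgroup with nilpotent
quotient. -/
def FiniteByNilpotent (G : Type*) [Group G] : Prop :=
  ∃ N : Subgroup G, ∃ _ : N.Normal, Finite N ∧ Group.IsNilpotent (G ⧸ N)

/-!
If `N` is finite and `G ⧸ N` is abelian, then `G` has only finitely many commutators, so each of
the finitely many generators of `G` has finitely many conjugates and the center has finite index.

Conversely, let `A` be abelian of index `m` and `F` finite with `G ⧸ F` nilpotent, so that
`γ c ≤ F` for some `c`, where `γ` is the lower central series. Modulo `γ (i + 2)`, a commutator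
`⁅u, g⁆` with `u ∈ γ i` is central, so `⁅u, g⁆ ^ (m * m) = ⁅u ^ m, g ^ m⁆ = 1` because
`u ^ m, g ^ m ∈ A`. Hence `x ^ (m * m) ∈ γ (i + 2)` for `x ∈ γ (i + 1)`, and every element of the
commutator subgroup `G'` has a power in `F`: `G'` is torsion. Then `G' ⊓ A` is a torsion subgroup
of the finitely generated abelian group `A`, hence finite, and it has finite index in `G'`.
-/

open Subgroup
open scoped commutatorElement IsMulCommutative

section Commutator

variable {G : Type*} [Group G]

theorem commutatorElement_pow_right_of_mem_center {a b : G} (h : ⁅a, b⁆ ∈ center G) (n : ℕ) :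
    ⁅a, b ^ n⁆ = ⁅a, b⁆ ^ n := by
  induction n with
  | zero => simp
  | succ n ih =>
    rw [pow_succ, commutatorElement_mul_right_eq_mul_conj, ih, mul_assoc _ (b ^ n),
      mem_center_iff.mp h, pow_succ]
    group

theorem commutatorElement_pow_left_of_mem_center {a b : G} (h : ⁅a, b⁆ ∈ center G) (n : ℕ) :
    ⁅a ^ n, b⁆ = ⁅a, b⁆ ^ n := by
  induction n with
  | zero => simp
  | succ n ih =>
    rw [pow_succ', commutatorElement_mul_left_eq_conj_mul, ih,
      mem_center_iff.mp (pow_mem h n) a, pow_succ]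
    group

theorem commutatorElement_pow_pow_of_mem_center {a b : G} (h : ⁅a, b⁆ ∈ center G) (m n : ℕ) :
    ⁅a ^ m, b ^ n⁆ = ⁅a, b⁆ ^ (m * n) := by
  have hn : ⁅a, b ^ n⁆ ∈ center G := by
    rw [commutatorElement_pow_right_of_mem_center h]
    exact pow_mem h n
  rw [commutatorElement_pow_left_of_mem_center hn, commutatorElement_pow_right_of_mem_center h,
    ← pow_mul, mul_comm]

theorem pow_eq_one_of_mem_closure_of_subset_center {s : Set G} (hs : s ⊆ center G) {n : ℕ}
    (hn : ∀ x ∈ s, x ^ n = 1) {x : G} (hx : x ∈ closure s) : x ^ n = 1 := by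
  have hcenter : closure s ≤ center G := (closure_le _).mpr hs
  induction hx using closure_induction with
  | mem x hx => exact hn x hx
  | one => exact one_pow n
  | mul x y _ hy ihx ihy =>
    rw [Commute.mul_pow (mem_center_iff.mp (hcenter hy) x), ihx, ihy, one_mul]
  | inv x _ ih => rw [inv_pow, ih, inv_one]

end Commutator

section LowerCentralSeries

variable {G : Type*} [Group G] {A : Subgroup G} [IsMulCommutative A] {m : ℕ}

theorem pow_mem_lowerCentralSeries_succ (hm : ∀ x : G, x ^ m ∈ A) (i : ℕ) {x : G}
    (hx : x ∈ (⊤ : Subgroup G).lowerCentralSeries (i + 1)) :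
    x ^ (m * m) ∈ (⊤ : Subgroup G).lowerCentralSeries (i + 2) := by
  set π := QuotientGroup.mk' ((⊤ : Subgroup G).lowerCentralSeries (i + 2))
  have hcentral : ∀ y ∈ (⊤ : Subgroup G).lowerCentralSeries (i + 1), π y ∈ center _ :=
    fun y hy ↦ by
      rw [← mem_comap, ← Subgroup.upperCentralSeriesStep_eq_comap_center]
      exact fun g ↦ commutator_mem_commutator hy (mem_top g)
  set S := {z | ∃ u ∈ (⊤ : Subgroup G).lowerCentralSeries i, ∃ g ∈ (⊤ : Subgroup G), ⁅u, g⁆ = z}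
  have hS : π '' S ⊆ center (G ⧸ (⊤ : Subgroup G).lowerCentralSeries (i + 2)) := by
    rintro _ ⟨_, ⟨u, hu, g, -, rfl⟩, rfl⟩
    exact hcentral _ (commutator_mem_commutator hu (mem_top g))
  have hpow : ∀ z ∈ π '' S, z ^ (m * m) = 1 := by
    rintro _ ⟨_, ⟨u, hu, g, -, rfl⟩, rfl⟩
    have hc := hcentral _ (commutator_mem_commutator hu (mem_top g))
    rw [map_commutatorElement] at hc ⊢
    rw [← commutatorElement_pow_pow_of_mem_center hc, ← map_pow, ← map_pow,
      ← map_commutatorElement, commutatorElement_eq_one_iff_mul_comm.mpr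
        (setLike_mul_comm (hm u) (hm g)), map_one]
  have hx' : π x ∈ closure (π '' S) := by
    rw [← MonoidHom.map_closure]
    exact mem_map_of_mem π hx
  rw [← QuotientGroup.eq_one_iff, QuotientGroup.mk_pow]
  exact pow_eq_one_of_mem_closure_of_subset_center hS hpow hx'

theorem pow_pow_mem_lowerCentralSeries_of_mem_commutator (hm : ∀ x : G, x ^ m ∈ A) (d : ℕ)
    {x : G} (hx : x ∈ commutator G) :
    x ^ ((m * m) ^ d) ∈ (⊤ : Subgroup G).lowerCentralSeries (d + 1) := by
  induction d with
  | zero => rwa [pow_zero, pow_one, top_lowerCentralSeries_one]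
  | succ d ih => simpa [pow_succ, pow_mul] using pow_mem_lowerCentralSeries_succ hm d ih

end LowerCentralSeries

theorem isMulTorsion_commutator_of_isNilpotent_quotient {G : Type*} [Group G] (A F : Subgroup G)
    [A.Normal] [A.FiniteIndex] [IsMulCommutative A] [F.Normal] [Finite F]
    [Group.IsNilpotent (G ⧸ F)] : IsMulTorsion (commutator G) := by
  obtain ⟨c, hc⟩ := Subgroup.nilpotent_iff_lowerCentralSeries.mp ‹Group.IsNilpotent (G ⧸ F)›
  have hcF : (⊤ : Subgroup G).lowerCentralSeries c ≤ F := fun x hx ↦ by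
    have hmap : QuotientGroup.mk' F x ∈ (⊤ : Subgroup (G ⧸ F)).lowerCentralSeries c :=
      lowerCentralSeries_mono c le_top
        ((map_lowerCentralSeries ⊤ (QuotientGroup.mk' F) c).le (mem_map_of_mem _ hx))
    rwa [hc, mem_bot, QuotientGroup.mk'_apply, QuotientGroup.eq_one_iff] at hmap
  set E := (A.index * A.index) ^ c
  have hE : E ≠ 0 :=
    pow_ne_zero _ (mul_ne_zero FiniteIndex.index_ne_zero FiniteIndex.index_ne_zero)
  rintro ⟨x, hx⟩
  have hxE : x ^ E ∈ F := hcF <| Subgroup.lowerCentralSeries_antitone _ c.le_succ <|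
    pow_pow_mem_lowerCentralSeries_of_mem_commutator A.pow_index_mem c hx
  have : IsOfFinOrder (x ^ E) := F.subtype.isOfFinOrder (isOfFinOrder_of_finite ⟨x ^ E, hxE⟩)
  exact Submonoid.isOfFinOrder_coe.mp (this.of_pow hE)

theorem CommGroup.fg_subgroup {A : Type*} [CommGroup A] [Group.FG A] (S : Subgroup A) :
    Group.FG S := by
  have : IsNoetherian ℤ (Additive A) := isNoetherian_of_isNoetherianRing_of_finite ℤ _
  have hfg : (AddSubgroup.toIntSubmodule S.toAddSubgroup).FG := IsNoetherian.noetherian _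
  rw [Submodule.fg_iff_addSubgroup_fg, AddSubgroup.toIntSubmodule_toAddSubgroup] at hfg
  exact (Group.fg_iff_subgroup_fg S).mpr ((Subgroup.fg_iff_add_fg S).mpr hfg)

theorem Subgroup.finite_of_isMulTorsion {G : Type*} [Group G] [Group.FG G] (A : Subgroup G)
    {T : Subgroup G} [A.FiniteIndex] [IsMulCommutative A] (hT : IsMulTorsion T) : Finite T := by
  have : Finite (T.subgroupOf A) := by
    have := CommGroup.fg_subgroup (T.subgroupOf A)
    refine CommGroup.finite_of_fg_isMulTorsion _ fun s ↦ ?_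
    have : IsOfFinOrder ((s : A) : G) :=
      (Submonoid.isOfFinOrder_coe (x := (⟨s, s.2⟩ : T))).mpr (hT _)
    exact Submonoid.isOfFinOrder_coe.mp (Submonoid.isOfFinOrder_coe.mp this)
  have : Finite (A.subgroupOf T) :=
    Finite.of_injective (fun x : A.subgroupOf T ↦ (⟨⟨x.1.1, x.2⟩, x.1.2⟩ : T.subgroupOf A))
      fun x y h ↦ by
        ext
        simpa using congrArg (fun z : T.subgroupOf A ↦ (z : G)) h
  exact (finite_iff_finite_and_finiteIndex (H := A.subgroupOf T)).mpr ⟨this, inferInstance⟩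

/-- A finitely generated group is finite-by-abelian iff it is both abelian-by-finite and
finite-by-nilpotent. -/
theorem fg_finiteByAbelian_iff_abelianByFinite_and_finiteByNilpotent
    (G : Type) [Group G] (hfg : Group.FG G) :
    FiniteByAbelian G ↔ (AbelianByFinite G ∧ FiniteByNilpotent G) := by
  constructor
  · rintro ⟨N, hN, hNfin, hcomm⟩
    have : Finite (commutatorSet G) :=
      ((N : Set G).toFinite.subset (by rintro _ ⟨a, b, rfl⟩; exact hcomm a b)).to_subtype
    have : IsMulCommutative (G ⧸ N) := Normal.quotient_commutative_iff_commutator_le.mpr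
      (commutator_le.mpr fun a _ b _ ↦ hcomm a b)
    exact ⟨⟨center G, inferInstance, fun a b _ hb ↦ mem_center_iff.mp hb a, inferInstance⟩,
      N, hN, hNfin, inferInstance⟩
  · rintro ⟨⟨A, hA, hAcomm, hAfin⟩, F, hF, hFfin, hFnil⟩
    have : IsMulCommutative A := .of_setLike_mul_comm fun a ha b hb ↦ hAcomm a b ha hb
    have : A.FiniteIndex := finiteIndex_of_finite_quotient
    exact ⟨commutator G, inferInstance,
      finite_of_isMulTorsion A (isMulTorsion_commutator_of_isNilpotent_quotient A F),
      fun a b ↦ commutator_mem_commutator (mem_top a) (mem_top b)⟩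
end
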